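/- arXiv:2411.10834 — 9 statements merged into one kernel-verified Lean document; each statement's English description precedes it below -/
import Mathlib

section
/- For all integers q,p ≥ 1 and every moment sequence c : ℤ → Matrix(Fin q, Fin p, ℂ), the following identities of semi-infinite matrices hold (all products are entrywise finite sums, since Υ, η, ν have one nonzero entry per row and column): Υ_{[q]}·M_c = M_c·Υ_{[p]}; Υ_{[q]}ᵀ·𝓜_c = 𝓜_c·Υ_{[p]}ᵀ; η_{[q]}·M_c·η_{[p]} = ν_{[q]}·M_c·ν_{[p]}; and η_{[q]}·𝓜_c·η_{[p]} = ν_{[q]}·𝓜_c·ν_{[p]}. -/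
noncomputable section

/-- CMV exponent sequence 0, -1, 1, -2, 2, … : e(2k)=k, e(2k+1)=-(k+1). -/
def cmvE (n : ℕ) : ℤ := if n % 2 = 0 then ((n / 2 : ℕ) : ℤ) else -(((n / 2 : ℕ) : ℤ) + 1)

/-- The semi-infinite 0–1 matrix Υ_{[r]}. -/
def Ups (r : ℕ) : ℕ → ℕ → ℂ := fun n m =>
  if n % r = m % r ∧ cmvE (m / r) = cmvE (n / r) + 1 then 1 else 0

/-- The intertwining matrix η_{[r]}. -/
def Eta (r : ℕ) : ℕ → ℕ → ℂ := fun n m =>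
  if n % r = m % r ∧ cmvE (m / r) = -cmvE (n / r) then 1 else 0

/-- The untangling matrix ν_{[r]}. -/
def Nu (r : ℕ) : ℕ → ℕ → ℂ := fun n m =>
  if n % r = m % r ∧ cmvE (m / r) = -cmvE (n / r) - 1 then 1 else 0

/-- Entrywise product of semi-infinite matrices (entrywise finite sums in all uses below). -/
def mprod (A B : ℕ → ℕ → ℂ) : ℕ → ℕ → ℂ := fun n m => ∑' k, A n k * B k m

/-- The semi-infinite identity matrix. -/
def mid : ℕ → ℕ → ℂ := fun n m => if n = m then 1 else 0

/-- Transpose of a semi-infinite matrix. -/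
def mtrans (A : ℕ → ℕ → ℂ) : ℕ → ℕ → ℂ := fun n m => A m n

/-- Powers of a semi-infinite matrix. -/
def mpow (A : ℕ → ℕ → ℂ) : ℕ → ℕ → ℕ → ℂ
  | 0 => mid
  | d + 1 => mprod A (mpow A d)

/-- The CMV monomial matrix Z_{[r]}(z). -/
def cmvZ (r : ℕ) (z : ℂ) : ℕ → ℕ → ℂ := fun n a =>
  if n % r = a then z ^ cmvE (n / r) else 0

def LowerTri (L : ℕ → ℕ → ℂ) : Prop := ∀ n m, n < m → L n m = 0

def UpperTri (U : ℕ → ℕ → ℂ) : Prop := ∀ n m, m < n → U n m = 0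

/-- The left CMV moment matrix M_c. -/
def cmvM {q p : ℕ} (hq : 0 < q) (hp : 0 < p)
    (c : ℤ → Matrix (Fin q) (Fin p) ℂ) : ℕ → ℕ → ℂ := fun n m =>
  c (cmvE (n / q) - cmvE (m / p)) ⟨n % q, Nat.mod_lt _ hq⟩ ⟨m % p, Nat.mod_lt _ hp⟩

/-- The right CMV moment matrix 𝓜_c. -/
def cmvMR {q p : ℕ} (hq : 0 < q) (hp : 0 < p)
    (c : ℤ → Matrix (Fin q) (Fin p) ℂ) : ℕ → ℕ → ℂ := fun n m =>
  c (cmvE (m / p) - cmvE (n / q)) ⟨n % q, Nat.mod_lt _ hq⟩ ⟨m % p, Nat.mod_lt _ hp⟩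

/-!
Reindex `ℕ` by pairs (CMV exponent `cmvE (n / r)`, residue `n % r`). In these coordinates
`Υ`, `η`, `ν` (and `Υᵀ`) are permutation matrices acting on the exponent alone, by
`t ↦ t + 1`, `t ↦ -t`, `t ↦ -t - 1` (and `t ↦ t - 1`), while both moment matrices are block
matrices whose block at exponents `(t, s)` depends only on `t - s`. Multiplying by such a
permutation matrix on the left (right) substitutes the permutation (its inverse) into the
row (column) exponent, and each identity reduces to an identity between the resulting
differences of exponents.
-/

def cmvEInv (j : ℤ) : ℕ := if 0 ≤ j then 2 * j.toNat else 2 * (-j).toNat - 1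

lemma cmvE_cmvEInv (j : ℤ) : cmvE (cmvEInv j) = j := by
  unfold cmvE cmvEInv; split_ifs <;> omega

lemma cmvEInv_cmvE (n : ℕ) : cmvEInv (cmvE n) = n := by
  unfold cmvE cmvEInv; split_ifs <;> omega

/-- The index of residue `b` in the block of exponent `t`, for blocks of size `r`. -/
def cmvIndex (r : ℕ) (t : ℤ) (b : ℕ) : ℕ := r * cmvEInv t + b

section cmvIndex

variable {r b : ℕ} {t : ℤ}

lemma cmvIndex_mod (hb : b < r) : cmvIndex r t b % r = b := by
  rw [cmvIndex, Nat.mul_add_mod, Nat.mod_eq_of_lt hb]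

lemma cmvE_cmvIndex_div (hb : b < r) : cmvE (cmvIndex r t b / r) = t := by
  rw [cmvIndex, Nat.mul_add_div (by omega), Nat.div_eq_of_lt hb, add_zero, cmvE_cmvEInv]

lemma eq_cmvIndex_iff (hr : 0 < r) (n k : ℕ) :
    k = cmvIndex r t (n % r) ↔ n % r = k % r ∧ cmvE (k / r) = t := by
  have hb := Nat.mod_lt n hr
  constructor
  · rintro rfl
    exact ⟨(cmvIndex_mod hb).symm, cmvE_cmvIndex_div hb⟩
  · rintro ⟨hmod, rfl⟩
    rw [cmvIndex, cmvEInv_cmvE, hmod, Nat.div_add_mod]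

end cmvIndex

def cmvShift (r : ℕ) (f : Equiv.Perm ℤ) : ℕ → ℕ → ℂ := fun n m =>
  if n % r = m % r ∧ cmvE (m / r) = f (cmvE (n / r)) then 1 else 0

/-- The matrix whose `q × p` block at CMV exponents `(t, s)` is `K t s`. -/
def cmvBlock {q p : ℕ} (hq : 0 < q) (hp : 0 < p) (K : ℤ → ℤ → Matrix (Fin q) (Fin p) ℂ) :
    ℕ → ℕ → ℂ := fun n m =>
  K (cmvE (n / q)) (cmvE (m / p)) ⟨n % q, Nat.mod_lt _ hq⟩ ⟨m % p, Nat.mod_lt _ hp⟩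

section cmvShift

variable {r : ℕ} (f : Equiv.Perm ℤ)

lemma Ups_eq_cmvShift : Ups r = cmvShift r (Equiv.addRight 1) := rfl

lemma Eta_eq_cmvShift : Eta r = cmvShift r (Equiv.neg ℤ) := rfl

lemma Nu_eq_cmvShift : Nu r = cmvShift r ((Equiv.neg ℤ).trans (Equiv.subRight 1)) := rfl

lemma mtrans_cmvShift : mtrans (cmvShift r f) = cmvShift r f.symm := by
  funext n m
  simp only [mtrans, cmvShift, eq_comm (a := n % r), f.eq_symm_apply, eq_comm (a := cmvE (n / r))]

lemma cmvShift_apply (hr : 0 < r) (n k : ℕ) :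
    cmvShift r f n k = if k = cmvIndex r (f (cmvE (n / r))) (n % r) then 1 else 0 := by
  simp only [cmvShift, eq_cmvIndex_iff hr]

lemma cmvShift_apply' (hr : 0 < r) (k m : ℕ) :
    cmvShift r f k m = if k = cmvIndex r (f.symm (cmvE (m / r))) (m % r) then 1 else 0 := by
  rw [← cmvShift_apply _ hr, ← mtrans_cmvShift]
  rfl

end cmvShift

lemma mprod_apply_of_row_eq_single {A : ℕ → ℕ → ℂ} {n j : ℕ}
    (hA : ∀ k, A n k = if k = j then 1 else 0) (B : ℕ → ℕ → ℂ) (m : ℕ) :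
    mprod A B n m = B j m := by
  rw [mprod, tsum_eq_single j fun k hk => by simp [hA, hk]]
  simp [hA]

lemma mprod_apply_of_col_eq_single {B : ℕ → ℕ → ℂ} {m j : ℕ}
    (hB : ∀ k, B k m = if k = j then 1 else 0) (A : ℕ → ℕ → ℂ) (n : ℕ) :
    mprod A B n m = A n j := by
  rw [mprod, tsum_eq_single j fun k hk => by simp [hB, hk]]
  simp [hB]

section cmvBlock

variable {q p : ℕ} (hq : 0 < q) (hp : 0 < p) (K : ℤ → ℤ → Matrix (Fin q) (Fin p) ℂ)
  (f : Equiv.Perm ℤ)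

lemma cmvShift_mprod_cmvBlock :
    mprod (cmvShift q f) (cmvBlock hq hp K) = cmvBlock hq hp fun t s => K (f t) s := by
  funext n m
  rw [mprod_apply_of_row_eq_single (cmvShift_apply f hq n)]
  have hb := Nat.mod_lt n hq
  simp only [cmvBlock, cmvIndex_mod hb, cmvE_cmvIndex_div hb]

lemma cmvBlock_mprod_cmvShift :
    mprod (cmvBlock hq hp K) (cmvShift p f) = cmvBlock hq hp fun t s => K t (f.symm s) := by
  funext n m
  rw [mprod_apply_of_col_eq_single (cmvShift_apply' f hp · m)]
  have ha := Nat.mod_lt m hp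
  simp only [cmvBlock, cmvIndex_mod ha, cmvE_cmvIndex_div ha]

end cmvBlock

/-- action of the spectral matrices Υ, η, ν on the CMV moment matrices. -/
theorem stmt_4 (q p : ℕ) (hq : 0 < q) (hp : 0 < p) (c : ℤ → Matrix (Fin q) (Fin p) ℂ) :
    mprod (Ups q) (cmvM hq hp c) = mprod (cmvM hq hp c) (Ups p) ∧
    mprod (mtrans (Ups q)) (cmvMR hq hp c) = mprod (cmvMR hq hp c) (mtrans (Ups p)) ∧
    mprod (mprod (Eta q) (cmvM hq hp c)) (Eta p)
      = mprod (mprod (Nu q) (cmvM hq hp c)) (Nu p) ∧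
    mprod (mprod (Eta q) (cmvMR hq hp c)) (Eta p)
      = mprod (mprod (Nu q) (cmvMR hq hp c)) (Nu p) := by
  have hM : cmvM hq hp c = cmvBlock hq hp fun t s => c (t - s) := rfl
  have hMR : cmvMR hq hp c = cmvBlock hq hp fun t s => c (s - t) := rfl
  simp only [hM, hMR, Ups_eq_cmvShift, Eta_eq_cmvShift, Nu_eq_cmvShift, mtrans_cmvShift,
    cmvShift_mprod_cmvBlock, cmvBlock_mprod_cmvShift]
  refine ⟨?_, ?_, ?_, ?_⟩ <;> congr 1 <;> funext t s <;> congr 1 <;> simp <;> ring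
end
end

section
/- For all integers q,p ≥ 1 and every moment sequence c : ℤ → Matrix(Fin q, Fin p, ℂ), the intertwining and untangling matrices exchange the left and right CMV moment matrices: η_{[q]}·M_c = 𝓜_c·η_{[p]}, M_c·η_{[p]} = η_{[q]}·𝓜_c, ν_{[q]}·M_c = 𝓜_c·ν_{[p]}, and M_c·ν_{[p]} = ν_{[q]}·𝓜_c (all products are entrywise finite sums with exactly one nonzero term). -/
noncomputable section

/-- Inverse of the CMV exponent sequence. -/
def invE (j : ℤ) : ℕ := if 0 ≤ j then (2*j).toNat else (-2*j-1).toNat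

lemma cmvE_invE (j : ℤ) : cmvE (invE j) = j := by
  unfold cmvE invE
  split_ifs <;> omega

lemma cmvE_inj : Function.Injective cmvE := by
  intro a b h
  unfold cmvE at h
  split_ifs at h <;> omega

lemma pk_mod (r : ℕ) (hr : 0 < r) (t : ℤ) (s : ℕ) (hs : s < r) :
    (r * invE t + s) % r = s := by
  rw [Nat.mul_add_mod, Nat.mod_eq_of_lt hs]

lemma pk_div (r : ℕ) (hr : 0 < r) (t : ℤ) (s : ℕ) (hs : s < r) :
    (r * invE t + s) / r = invE t := by
  rw [Nat.mul_add_div hr, Nat.div_eq_of_lt hs, Nat.add_zero]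

lemma partner_iff (r : ℕ) (hr : 0 < r) (s : ℕ) (hs : s < r) (k : ℕ) (t : ℤ) :
    (k % r = s ∧ cmvE (k / r) = t) ↔ k = r * invE t + s := by
  constructor
  · rintro ⟨h1, h2⟩
    have h3 : k / r = invE t := cmvE_inj (by rw [h2, cmvE_invE])
    rw [← h3, ← h1]
    exact (Nat.div_add_mod k r).symm
  · rintro rfl
    exact ⟨pk_mod r hr t s hs, by rw [pk_div r hr t s hs, cmvE_invE]⟩

lemma tsum_ite_mul_left {P : ℕ → Prop} [DecidablePred P] (k0 : ℕ)
    (hP : ∀ k, P k ↔ k = k0) (g : ℕ → ℂ) :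
    ∑' k, (if P k then (1:ℂ) else 0) * g k = g k0 := by
  rw [tsum_eq_single k0 (by intro b hb; simp [hP, hb])]
  simp [hP]

lemma tsum_ite_mul_right {P : ℕ → Prop} [DecidablePred P] (k0 : ℕ)
    (hP : ∀ k, P k ↔ k = k0) (g : ℕ → ℂ) :
    ∑' k, g k * (if P k then (1:ℂ) else 0) = g k0 := by
  rw [tsum_eq_single k0 (by intro b hb; simp [hP, hb])]
  simp [hP]

/-- η and ν exchange the left and right CMV moment matrices. -/
theorem stmt_5 (q p : ℕ) (hq : 0 < q) (hp : 0 < p) (c : ℤ → Matrix (Fin q) (Fin p) ℂ) :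
    mprod (Eta q) (cmvM hq hp c) = mprod (cmvMR hq hp c) (Eta p) ∧
    mprod (cmvM hq hp c) (Eta p) = mprod (Eta q) (cmvMR hq hp c) ∧
    mprod (Nu q) (cmvM hq hp c) = mprod (cmvMR hq hp c) (Nu p) ∧
    mprod (cmvM hq hp c) (Nu p) = mprod (Nu q) (cmvMR hq hp c) := by
  have hnq : ∀ n : ℕ, n % q < q := fun n => Nat.mod_lt _ hq
  have hmp : ∀ m : ℕ, m % p < p := fun m => Nat.mod_lt _ hp
  -- generic collapse lemmas
  have etaL : ∀ (A : ℕ → ℕ → ℂ) (n m : ℕ),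
      mprod (Eta q) A n m = A (q * invE (-cmvE (n / q)) + n % q) m := by
    intro A n m
    refine tsum_ite_mul_left _ (fun k => ?_) (fun k => A k m)
    rw [← partner_iff q hq (n % q) (hnq n) k (-cmvE (n / q))]
    constructor
    · rintro ⟨a, b⟩; exact ⟨a.symm, b⟩
    · rintro ⟨a, b⟩; exact ⟨a.symm, b⟩
  have etaR : ∀ (A : ℕ → ℕ → ℂ) (n m : ℕ),
      mprod A (Eta p) n m = A n (p * invE (-cmvE (m / p)) + m % p) := by
    intro A n m
    refine tsum_ite_mul_right _ (fun k => ?_) (fun k => A n k)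
    rw [← partner_iff p hp (m % p) (hmp m) k (-cmvE (m / p))]
    constructor
    · rintro ⟨a, b⟩; exact ⟨a, by omega⟩
    · rintro ⟨a, b⟩; exact ⟨a, by omega⟩
  have nuL : ∀ (A : ℕ → ℕ → ℂ) (n m : ℕ),
      mprod (Nu q) A n m = A (q * invE (-cmvE (n / q) - 1) + n % q) m := by
    intro A n m
    refine tsum_ite_mul_left _ (fun k => ?_) (fun k => A k m)
    rw [← partner_iff q hq (n % q) (hnq n) k (-cmvE (n / q) - 1)]
    constructor
    · rintro ⟨a, b⟩; exact ⟨a.symm, b⟩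
    · rintro ⟨a, b⟩; exact ⟨a.symm, b⟩
  have nuR : ∀ (A : ℕ → ℕ → ℂ) (n m : ℕ),
      mprod A (Nu p) n m = A n (p * invE (-cmvE (m / p) - 1) + m % p) := by
    intro A n m
    refine tsum_ite_mul_right _ (fun k => ?_) (fun k => A n k)
    rw [← partner_iff p hp (m % p) (hmp m) k (-cmvE (m / p) - 1)]
    constructor
    · rintro ⟨a, b⟩; exact ⟨a, by omega⟩
    · rintro ⟨a, b⟩; exact ⟨a, by omega⟩
  refine ⟨?_, ?_, ?_, ?_⟩ <;> funext n m
  · rw [etaL, etaR]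
    simp only [cmvM, cmvMR, pk_mod q hq _ _ (hnq n), pk_div q hq _ _ (hnq n),
      pk_mod p hp _ _ (hmp m), pk_div p hp _ _ (hmp m), cmvE_invE]
    congr 1
    ring
  · rw [etaR, etaL]
    simp only [cmvM, cmvMR, pk_mod q hq _ _ (hnq n), pk_div q hq _ _ (hnq n),
      pk_mod p hp _ _ (hmp m), pk_div p hp _ _ (hmp m), cmvE_invE]
    congr 1
    ring
  · rw [nuL, nuR]
    simp only [cmvM, cmvMR, pk_mod q hq _ _ (hnq n), pk_div q hq _ _ (hnq n),
      pk_mod p hp _ _ (hmp m), pk_div p hp _ _ (hmp m), cmvE_invE]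
    congr 1
    ring
  · rw [nuR, nuL]
    simp only [cmvM, cmvMR, pk_mod q hq _ _ (hnq n), pk_div q hq _ _ (hnq n),
      pk_mod p hp _ _ (hmp m), pk_div p hp _ _ (hmp m), cmvE_invE]
    congr 1
    ring
end
end

section
/- (Biorthogonality.) Let q,p ≥ 1 and let c : ℤ → Matrix(Fin q, Fin p, ℂ) be a moment sequence. Suppose L is an invertible lower triangular and U an invertible upper triangular semi-infinite matrix with M_c = L⁻¹·U⁻¹ (equivalently L·M_c·U = I, all products being entrywise finite sums). Define the Laurent polynomials B_n^{(b)}(z) := ∑_{k≤n} L(n,k)·Z_{[q]}(z)(k,b) and A_m^{(a)}(z) := ∑_{k≤m} Z_{[p]}(z)(k,a)·U(k,m). Then for all n,m ∈ ℕ: ∑_{b=0}^{q−1} ∑_{a=0}^{p−1} ⟪B_n^{(b)}, A_m^{(a)}⟫_{b,a} = δ_{n,m}. -/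
noncomputable section

/-- The moment pairing ⟪f,h⟫_{b,a} = ∑_{s,t∈ℤ} f_s·h_t·c(s−t)(b,a). -/
def lpair {q p : ℕ} (c : ℤ → Matrix (Fin q) (Fin p) ℂ) (f h : ℤ → ℂ)
    (b : Fin q) (a : Fin p) : ℂ :=
  ∑' st : ℤ × ℤ, f st.1 * h st.2 * c (st.1 - st.2) b a

/-- Coefficients of B_n^{(b)}(z) := ∑_{k≤n} L(n,k)·Z_{[q]}(z)(k,b). -/
def BcoefL (q : ℕ) (L : ℕ → ℕ → ℂ) (n b : ℕ) : ℤ → ℂ := fun s =>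
  ∑ k ∈ Finset.range (n + 1), if k % q = b ∧ cmvE (k / q) = s then L n k else 0

/-- Coefficients of A_m^{(a)}(z) := ∑_{k≤m} Z_{[p]}(z)(k,a)·U(k,m). -/
def AcoefU (p : ℕ) (U : ℕ → ℕ → ℂ) (m a : ℕ) : ℤ → ℂ := fun t =>
  ∑ k ∈ Finset.range (m + 1), if k % p = a ∧ cmvE (k / p) = t then U k m else 0

lemma sum4_comm {α β γ δ : Type*} (s1 : Finset α) (s2 : Finset β) (s3 : Finset γ)
    (s4 : Finset δ) (f : α → β → γ → δ → ℂ) :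
    (∑ a ∈ s1, ∑ b ∈ s2, ∑ c ∈ s3, ∑ d ∈ s4, f a b c d)
      = ∑ c ∈ s3, ∑ d ∈ s4, ∑ a ∈ s1, ∑ b ∈ s2, f a b c d := by
  trans ∑ a ∈ s1, ∑ c ∈ s3, ∑ d ∈ s4, ∑ b ∈ s2, f a b c d
  · exact Finset.sum_congr rfl fun a _ =>
      (Finset.sum_comm).trans (Finset.sum_congr rfl fun c _ => Finset.sum_comm)
  · exact (Finset.sum_comm).trans (Finset.sum_congr rfl fun c _ => Finset.sum_comm)

/-- biorthogonality of the CMV mixed multiple orthogonal Laurent polynomials. -/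
theorem stmt_7 (q p : ℕ) (hq : 0 < q) (hp : 0 < p) (c : ℤ → Matrix (Fin q) (Fin p) ℂ)
    (L Li U Ui : ℕ → ℕ → ℂ)
    (hL : LowerTri L) (hLi : LowerTri Li) (hU : UpperTri U) (hUi : UpperTri Ui)
    (hLLi : mprod L Li = mid) (hLiL : mprod Li L = mid)
    (hUUi : mprod U Ui = mid) (hUiU : mprod Ui U = mid)
    (hM : ∀ n m, cmvM hq hp c n m = mprod Li Ui n m) :
    ∀ n m : ℕ,
      (∑ b : Fin q, ∑ a : Fin p, lpair c (BcoefL q L n b.1) (AcoefU p U m a.1) b a)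
        = if n = m then 1 else 0 := by
  intro n m
  classical
  set R1 := Finset.range (n+1) with hR1
  set R2 := Finset.range (m+1) with hR2
  set S1 := R1.image (fun k => cmvE (k / q)) with hS1
  set S2 := R2.image (fun j => cmvE (j / p)) with hS2
  have key : ∀ (b : Fin q) (a : Fin p),
      lpair c (BcoefL q L n b.1) (AcoefU p U m a.1) b a
      = ∑ k ∈ R1, ∑ j ∈ R2,
          if k % q = b.1 ∧ j % p = a.1 then
            L n k * U j m * c (cmvE (k / q) - cmvE (j / p)) b a else 0 := by
    intro b a
    have hsupp : ∀ st : ℤ × ℤ, st ∉ S1 ×ˢ S2 →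
        BcoefL q L n b.1 st.1 * AcoefU p U m a.1 st.2 * c (st.1 - st.2) b a = 0 := by
      intro st hst
      rw [Finset.mem_product, not_and_or] at hst
      rcases hst with h | h
      · have hz : BcoefL q L n b.1 st.1 = 0 := by
          apply Finset.sum_eq_zero
          intro k hk
          rw [if_neg]
          rintro ⟨-, hks⟩
          exact h (Finset.mem_image.2 ⟨k, hk, hks⟩)
        simp [hz]
      · have hz : AcoefU p U m a.1 st.2 = 0 := by
          apply Finset.sum_eq_zero
          intro j hj
          rw [if_neg]
          rintro ⟨-, hjt⟩
          exact h (Finset.mem_image.2 ⟨j, hj, hjt⟩)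
        simp [hz]
    rw [lpair, tsum_eq_sum hsupp, Finset.sum_product]
    simp only [BcoefL, AcoefU, Finset.sum_mul_sum, Finset.sum_mul, Finset.mul_sum]
    rw [sum4_comm S1 S2 (Finset.range (m+1)) (Finset.range (n+1)), Finset.sum_comm]
    refine Finset.sum_congr rfl fun k hk => Finset.sum_congr rfl fun j hj => ?_
    rw [Finset.sum_eq_single (cmvE (k / q))]
    · rw [Finset.sum_eq_single (cmvE (j / p))]
      · by_cases h1 : k % q = b.1 <;> by_cases h2 : j % p = a.1 <;>
          simp [h1, h2]
      · intro t _ ht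
        have hz : (if j % p = a.1 ∧ cmvE (j / p) = t then U j m else (0:ℂ)) = 0 :=
          if_neg (by rintro ⟨-, h⟩; exact ht h.symm)
        rw [hz, mul_zero, zero_mul]
      · intro hmem
        exact absurd (Finset.mem_image.2 ⟨j, hj, rfl⟩) hmem
    · intro s _ hs
      apply Finset.sum_eq_zero
      intro t _
      have hz : (if k % q = b.1 ∧ cmvE (k / q) = s then L n k else (0:ℂ)) = 0 :=
        if_neg (by rintro ⟨-, h⟩; exact hs h.symm)
      rw [hz, zero_mul, zero_mul]
    · intro hmem
      exact absurd (Finset.mem_image.2 ⟨k, hk, rfl⟩) hmem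
  simp only [key]
  rw [sum4_comm]
  have collapse : ∀ k ∈ R1, ∀ j ∈ R2,
      (∑ b : Fin q, ∑ a : Fin p,
        if k % q = b.1 ∧ j % p = a.1 then
          L n k * U j m * c (cmvE (k / q) - cmvE (j / p)) b a else 0)
      = L n k * cmvM hq hp c k j * U j m := by
    intro k _ j _
    rw [Finset.sum_eq_single (⟨k % q, Nat.mod_lt _ hq⟩ : Fin q)]
    · rw [Finset.sum_eq_single (⟨j % p, Nat.mod_lt _ hp⟩ : Fin p)]
      · rw [if_pos ⟨rfl, rfl⟩, cmvM]; ring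
      · intro a _ ha
        rw [if_neg (by rintro ⟨-, h⟩; exact ha (Fin.ext h.symm))]
      · intro hmem; exact absurd (Finset.mem_univ _) hmem
    · intro b _ hb
      apply Finset.sum_eq_zero
      intro a _
      rw [if_neg (by rintro ⟨h, -⟩; exact hb (Fin.ext h.symm))]
    · intro hmem; exact absurd (Finset.mem_univ _) hmem
  rw [Finset.sum_congr rfl fun k hk => Finset.sum_congr rfl fun j hj => collapse k hk j hj]
  have hMexp : ∀ k ∈ R1, ∀ j : ℕ,
      cmvM hq hp c k j = ∑ i ∈ R1, Li k i * Ui i j := by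
    intro k hk j
    rw [hM, mprod]
    apply tsum_eq_sum
    intro i hi
    have hki : k < i := lt_of_le_of_lt (Nat.lt_succ_iff.1 (Finset.mem_range.1 hk))
      (by simpa [hR1, Nat.lt_succ_iff, not_le] using hi)
    rw [hLi k i hki, zero_mul]
  have step : (∑ k ∈ R1, ∑ j ∈ R2, L n k * cmvM hq hp c k j * U j m)
      = ∑ i ∈ R1, (∑ k ∈ R1, L n k * Li k i) * (∑ j ∈ R2, Ui i j * U j m) := by
    calc (∑ k ∈ R1, ∑ j ∈ R2, L n k * cmvM hq hp c k j * U j m)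
        = ∑ k ∈ R1, ∑ j ∈ R2, ∑ i ∈ R1,
            (L n k * Li k i) * (Ui i j * U j m) := by
          refine Finset.sum_congr rfl fun k hk => Finset.sum_congr rfl fun j hj => ?_
          rw [hMexp k hk j, Finset.mul_sum, Finset.sum_mul]
          exact Finset.sum_congr rfl fun i _ => by ring
      _ = ∑ i ∈ R1, ∑ k ∈ R1, ∑ j ∈ R2, (L n k * Li k i) * (Ui i j * U j m) := by
          refine (Finset.sum_congr rfl fun k _ => Finset.sum_comm).trans Finset.sum_comm
      _ = ∑ i ∈ R1, (∑ k ∈ R1, L n k * Li k i) * (∑ j ∈ R2, Ui i j * U j m) := by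
          exact Finset.sum_congr rfl fun i _ => (Finset.sum_mul_sum _ _ _ _).symm
  rw [step]
  have hP : ∀ i : ℕ, (∑ k ∈ R1, L n k * Li k i) = mid n i := by
    intro i
    rw [← hLLi, mprod]
    symm
    apply tsum_eq_sum
    intro k hk
    have : n < k := by simpa [hR1, Nat.lt_succ_iff, not_le] using hk
    rw [hL n k this, zero_mul]
  have hQ : ∀ i : ℕ, (∑ j ∈ R2, Ui i j * U j m) = mid i m := by
    intro i
    rw [← hUiU, mprod]
    symm
    apply tsum_eq_sum
    intro j hj
    have : m < j := by simpa [hR2, Nat.lt_succ_iff, not_le] using hj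
    rw [hU j m this, mul_zero]
  simp only [hP, hQ]
  rw [Finset.sum_eq_single n]
  · simp [mid]
  · intro i _ hi
    rw [show mid n i = 0 from if_neg (fun h => hi h.symm), zero_mul]
  · intro hmem
    exact absurd (Finset.mem_range.2 (Nat.lt_succ_self n)) hmem
end
end

section
/- (Banded structure of the recursion matrix.) Let q,p ≥ 1, let L be an invertible lower triangular and V an invertible upper triangular semi-infinite complex matrix, and suppose a semi-infinite matrix T satisfies T(n,m) = (L·Υ_{[q]}·L⁻¹)(n,m) and T(n,m) = (V⁻¹·Υ_{[p]}·V)(n,m) for all n,m ∈ ℕ (the triple products being entrywise finite sums). Then T is a banded matrix with 2q superdiagonals and 2p subdiagonals: T(n,m) = 0 whenever m > n + 2q or n > m + 2p. -/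
noncomputable section

lemma cmvE_step (a b : ℕ) (h : cmvE b = cmvE a + 1) : b ≤ a + 2 ∧ a ≤ b + 2 := by
  unfold cmvE at h
  split_ifs at h <;> omega

lemma div_mod_bound (r n m : ℕ) (hmod : n % r = m % r) (hdiv : m / r ≤ n / r + 2) :
    m ≤ n + 2 * r := by
  have h1 := Nat.div_add_mod n r
  have h2 := Nat.div_add_mod m r
  have h3 : r * (m / r) ≤ r * (n / r) + 2 * r := by
    calc r * (m / r) ≤ r * (n / r + 2) := Nat.mul_le_mul_left r hdiv
    _ = r * (n / r) + 2 * r := by ring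
  linarith

lemma ups_bound (r a b : ℕ) (h : Ups r a b ≠ 0) : b ≤ a + 2 * r ∧ a ≤ b + 2 * r := by
  rw [Ups] at h
  by_cases hc : a % r = b % r ∧ cmvE (b / r) = cmvE (a / r) + 1
  · obtain ⟨h1, h2⟩ := hc
    obtain ⟨hb, ha⟩ := cmvE_step (a / r) (b / r) h2
    exact ⟨div_mod_bound r a b h1 hb, div_mod_bound r b a h1.symm ha⟩
  · simp [hc] at h

/-- banded structure of the recursion matrix T = L·Υ_{[q]}·L⁻¹ = V⁻¹·Υ_{[p]}·V. -/
theorem stmt_8 (q p : ℕ) (hq : 1 ≤ q) (hp : 1 ≤ p)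
    (L Li V Vi T : ℕ → ℕ → ℂ)
    (hL : LowerTri L) (hLi : LowerTri Li) (hV : UpperTri V) (hVi : UpperTri Vi)
    (hLLi : mprod L Li = mid) (hLiL : mprod Li L = mid)
    (hVVi : mprod V Vi = mid) (hViV : mprod Vi V = mid)
    (hT1 : ∀ n m, T n m = mprod (mprod L (Ups q)) Li n m)
    (hT2 : ∀ n m, T n m = mprod (mprod Vi (Ups p)) V n m) :
    ∀ n m, (n + 2 * q < m → T n m = 0) ∧ (m + 2 * p < n → T n m = 0) := by
  intro n m
  constructor
  · intro hnm
    rw [hT1]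
    unfold mprod
    have hz : ∀ j, (∑' k, L n k * Ups q k j) * Li j m = 0 := by
      intro j
      by_cases hjm : j < m
      · rw [hLi j m hjm, mul_zero]
      · have hin : ∀ k, L n k * Ups q k j = 0 := by
          intro k
          by_cases hkn : n < k
          · rw [hL n k hkn, zero_mul]
          · by_cases hu : Ups q k j = 0
            · rw [hu, mul_zero]
            · exfalso
              have := (ups_bound q k j hu).1
              omega
        calc (∑' k, L n k * Ups q k j) * Li j m
            = (∑' k, (0:ℂ)) * Li j m := by rw [tsum_congr hin]
          _ = 0 := by rw [tsum_zero, zero_mul]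
    calc (∑' j, (∑' k, L n k * Ups q k j) * Li j m) = ∑' _ : ℕ, (0:ℂ) := tsum_congr hz
      _ = 0 := tsum_zero
  · intro hmn
    rw [hT2]
    unfold mprod
    have hz : ∀ j, (∑' k, Vi n k * Ups p k j) * V j m = 0 := by
      intro j
      by_cases hjm : m < j
      · rw [hV j m hjm, mul_zero]
      · have hin : ∀ k, Vi n k * Ups p k j = 0 := by
          intro k
          by_cases hkn : k < n
          · rw [hVi n k hkn, zero_mul]
          · by_cases hu : Ups p k j = 0
            · rw [hu, mul_zero]
            · exfalso
              have := (ups_bound p k j hu).2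
              omega
        calc (∑' k, Vi n k * Ups p k j) * V j m
            = (∑' k, (0:ℂ)) * V j m := by rw [tsum_congr hin]
          _ = 0 := by rw [tsum_zero, zero_mul]
    calc (∑' j, (∑' k, Vi n k * Ups p k j) * V j m) = ∑' _ : ℕ, (0:ℂ) := tsum_congr hz
      _ = 0 := tsum_zero
end
end

section
/- (Recurrence relations.) Let q,p ≥ 1. (i) Let L be an invertible lower triangular semi-infinite matrix and set T := L·Υ_{[q]}·L⁻¹ (entrywise finite sums; then T(n,m) = 0 for m > n+2q). Then for every z ∈ ℂ∖{0}, every n ∈ ℕ and b ∈ {0,…,q−1}: ∑_{m ≤ n+2q} T(n,m)·B(m,b)(z) = z·B(n,b)(z), where B(m,b)(z) := ∑_{k≤m} L(m,k)·Z_{[q]}(z)(k,b). (ii) Let V be an invertible upper triangular semi-infinite matrix and set T' := V⁻¹·Υ_{[p]}·V (then T'(n,m) = 0 for n > m+2p). Then for every z ∈ ℂ∖{0}, every a ∈ {0,…,p−1} and m ∈ ℕ: ∑_{n} F(a,n)(z⁻¹)·T'(n,m) = z·F(a,m)(z⁻¹), where F(a,n)(w) := ∑_{k≤n} Z_{[p]}(w)(k,a)·V(k,n)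 and the sum over n is finite. -/
noncomputable section

def einv (k : ℤ) : ℕ := if 0 ≤ k then 2 * k.toNat else 2 * (-k).toNat - 1

lemma cmvE_einv (k : ℤ) : cmvE (einv k) = k := by
  unfold cmvE einv
  split
  · rw [if_pos (by omega : 2 * Int.toNat k % 2 = 0),
      Nat.mul_div_cancel_left _ (by norm_num : 0 < 2)]
    omega
  · have h : ¬ (2 * (-k).toNat - 1) % 2 = 0 := by omega
    rw [if_neg h]
    omega

lemma einv_cmvE (n : ℕ) : einv (cmvE n) = n := by
  unfold cmvE einv
  split
  · rw [if_pos (by positivity)]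
    omega
  · rw [if_neg (by omega)]
    omega

def tauF (r k : ℕ) : ℕ := r * einv (cmvE (k / r) - 1) + k % r
def sigF (r k : ℕ) : ℕ := r * einv (cmvE (k / r) + 1) + k % r

lemma tau_mod {r : ℕ} (hr : 0 < r) (k : ℕ) : tauF r k % r = k % r := by
  unfold tauF; rw [Nat.mul_add_mod, Nat.mod_mod_of_dvd] <;> simp

lemma tau_div {r : ℕ} (hr : 0 < r) (k : ℕ) : tauF r k / r = einv (cmvE (k / r) - 1) := by
  unfold tauF; rw [Nat.mul_add_div hr, Nat.div_eq_of_lt (Nat.mod_lt _ hr), Nat.add_zero]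

lemma sig_mod {r : ℕ} (hr : 0 < r) (k : ℕ) : sigF r k % r = k % r := by
  unfold sigF; rw [Nat.mul_add_mod, Nat.mod_mod_of_dvd] <;> simp

lemma sig_div {r : ℕ} (hr : 0 < r) (k : ℕ) : sigF r k / r = einv (cmvE (k / r) + 1) := by
  unfold sigF; rw [Nat.mul_add_div hr, Nat.div_eq_of_lt (Nat.mod_lt _ hr), Nat.add_zero]

lemma einv_sub_le (d : ℕ) : einv (cmvE d - 1) ≤ d + 2 := by
  unfold cmvE einv; split <;> split <;> omega

lemma einv_sub_ge (d : ℕ) : d ≤ einv (cmvE d - 1) + 2 := by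
  unfold cmvE einv; split <;> split <;> omega

lemma tau_le {r : ℕ} (hr : 0 < r) (k : ℕ) : tauF r k ≤ k + 2 * r := by
  have h1 := einv_sub_le (k / r)
  have h2 := Nat.div_add_mod k r
  unfold tauF
  nlinarith [Nat.mul_le_mul_left r h1]

lemma le_tau {r : ℕ} (hr : 0 < r) (k : ℕ) : k ≤ tauF r k + 2 * r := by
  have h1 := einv_sub_ge (k / r)
  have h2 := Nat.div_add_mod k r
  unfold tauF
  nlinarith [Nat.mul_le_mul_left r h1]

lemma tau_sig {r : ℕ} (hr : 0 < r) (k : ℕ) : tauF r (sigF r k) = k := by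
  unfold tauF
  rw [sig_div hr, sig_mod hr, cmvE_einv, add_sub_cancel_right, einv_cmvE]
  exact Nat.div_add_mod k r

lemma sig_tau {r : ℕ} (hr : 0 < r) (k : ℕ) : sigF r (tauF r k) = k := by
  unfold sigF
  rw [tau_div hr, tau_mod hr, cmvE_einv, sub_add_cancel, einv_cmvE]
  exact Nat.div_add_mod k r

lemma Ups_eq {r : ℕ} (hr : 0 < r) (j k : ℕ) :
    Ups r j k = if j = tauF r k then 1 else 0 := by
  unfold Ups
  congr 1
  simp only [eq_iff_iff]
  constructor
  · rintro ⟨h1, h2⟩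
    have h3 : cmvE (j / r) = cmvE (k / r) - 1 := by omega
    have h4 : einv (cmvE (k / r) - 1) = j / r := by rw [← h3, einv_cmvE]
    have h5 := Nat.div_add_mod j r
    unfold tauF; rw [h4]; omega
  · rintro rfl
    rw [tau_mod hr, tau_div hr, cmvE_einv]
    exact ⟨rfl, by ring⟩

lemma mprod_Ups {r : ℕ} (hr : 0 < r) (A : ℕ → ℕ → ℂ) (n k : ℕ) :
    mprod A (Ups r) n k = A n (tauF r k) := by
  unfold mprod
  have : ∀ j, A n j * Ups r j k = if j = tauF r k then A n j else 0 := by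
    intro j; rw [Ups_eq hr]; split <;> simp
  simp_rw [this]
  rw [tsum_eq_single (tauF r k) (fun j hj => if_neg hj), if_pos rfl]

lemma cmvZ_sig {r : ℕ} (hr : 0 < r) {z : ℂ} (hz : z ≠ 0) (k b : ℕ) :
    cmvZ r z (sigF r k) b = z * cmvZ r z k b := by
  unfold cmvZ
  rw [sig_mod hr, sig_div hr, cmvE_einv]
  split
  · rw [zpow_add_one₀ hz]; ring
  · rw [mul_zero]

lemma cmvZ_tau {r : ℕ} (hr : 0 < r) {z : ℂ} (hz : z ≠ 0) (k a : ℕ) :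
    cmvZ r z⁻¹ (tauF r k) a = z * cmvZ r z⁻¹ k a := by
  unfold cmvZ
  rw [tau_mod hr, tau_div hr, cmvE_einv]
  split
  · rw [zpow_sub_one₀ (inv_ne_zero hz), inv_inv]; ring
  · rw [mul_zero]

/-- recurrence relations T·B(z) = z·B(z) and A(z⁻¹)·T' = z·A(z⁻¹). -/
theorem stmt_9 (q p : ℕ) (hq : 1 ≤ q) (hp : 1 ≤ p) (z : ℂ) (hz : z ≠ 0)
    (L Li : ℕ → ℕ → ℂ) (hL : LowerTri L) (hLi : LowerTri Li)
    (hLLi : mprod L Li = mid) (hLiL : mprod Li L = mid)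
    (V Vi : ℕ → ℕ → ℂ) (hV : UpperTri V) (hVi : UpperTri Vi)
    (hVVi : mprod V Vi = mid) (hViV : mprod Vi V = mid) :
    (∀ n b : ℕ, b < q →
      (∑ m ∈ Finset.range (n + 2 * q + 1),
        mprod (mprod L (Ups q)) Li n m *
          (∑ k ∈ Finset.range (m + 1), L m k * cmvZ q z k b))
        = z * ∑ k ∈ Finset.range (n + 1), L n k * cmvZ q z k b) ∧
    (∀ a m : ℕ, a < p →
      (∑' n, (∑ k ∈ Finset.range (n + 1), cmvZ p z⁻¹ k a * V k n) *
          mprod (mprod Vi (Ups p)) V n m)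
        = z * ∑ k ∈ Finset.range (m + 1), cmvZ p z⁻¹ k a * V k m) := by
  constructor
  · intro n b hb
    have hq0 : 0 < q := hq
    set N := n + 2 * q with hN
    -- T entries as finite sums
    have hTnm : ∀ m, mprod (mprod L (Ups q)) Li n m
        = ∑ k ∈ Finset.range (N + 1), L n (tauF q k) * Li k m := by
      intro m
      have h1 : mprod (mprod L (Ups q)) Li n m = ∑' k, L n (tauF q k) * Li k m :=
        tsum_congr fun k => by rw [mprod_Ups hq0]
      rw [h1]
      apply tsum_eq_sum
      intro k hk
      have hk' : N < k := by simpa [Finset.mem_range, Nat.lt_succ_iff] using hk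
      have hlt : n < tauF q k := by have := le_tau hq0 k; omega
      rw [hL _ _ hlt, zero_mul]
    -- rearrange
    calc ∑ m ∈ Finset.range (N + 1),
          mprod (mprod L (Ups q)) Li n m *
            (∑ k ∈ Finset.range (m + 1), L m k * cmvZ q z k b)
        = ∑ k ∈ Finset.range (N + 1), L n (tauF q k) *
            ∑ m ∈ Finset.range (N + 1), Li k m *
              (∑ j ∈ Finset.range (m + 1), L m j * cmvZ q z j b) := by
          simp_rw [hTnm, Finset.sum_mul, mul_assoc]
          rw [Finset.sum_comm]
          simp_rw [← Finset.mul_sum]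
      _ = ∑ k ∈ Finset.range (N + 1), L n (tauF q k) * cmvZ q z k b := by
          apply Finset.sum_congr rfl
          intro k hk
          have hkN : k ≤ N := by simpa [Finset.mem_range, Nat.lt_succ_iff] using hk
          congr 1
          -- inner identity: (Li · L · Z)(k,b) = Z(k,b)
          have hext : ∀ m ∈ Finset.range (N + 1),
              Li k m * (∑ j ∈ Finset.range (m + 1), L m j * cmvZ q z j b)
              = ∑ j ∈ Finset.range (N + 1), Li k m * (L m j * cmvZ q z j b) := by
            intro m hm
            have hmN : m ≤ N := by simpa [Finset.mem_range, Nat.lt_succ_iff] using hm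
            rw [Finset.mul_sum]
            apply Finset.sum_subset
            · intro j hj
              simp only [Finset.mem_range] at hj ⊢; omega
            · intro j _ hj
              have : m < j := by simpa [Finset.mem_range, Nat.lt_succ_iff] using hj
              rw [hL _ _ this, zero_mul, mul_zero]
          rw [Finset.sum_congr rfl hext, Finset.sum_comm]
          have hmid : ∀ j ∈ Finset.range (N + 1),
              ∑ m ∈ Finset.range (N + 1), Li k m * (L m j * cmvZ q z j b)
              = (if k = j then 1 else 0) * cmvZ q z j b := by
            intro j _
            have h2 : ∑ m ∈ Finset.range (N + 1), Li k m * (L m j * cmvZ q z j b)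
                = (∑ m ∈ Finset.range (N + 1), Li k m * L m j) * cmvZ q z j b := by
              rw [Finset.sum_mul]
              exact Finset.sum_congr rfl fun m _ => (mul_assoc _ _ _).symm
            rw [h2]
            congr 1
            have h3 : (∑ m ∈ Finset.range (N + 1), Li k m * L m j) = mprod Li L k j := by
              symm
              apply tsum_eq_sum
              intro m hm
              have : k < m := by simp only [Finset.mem_range, Nat.lt_succ_iff] at hm; omega
              rw [hLi _ _ this, zero_mul]
            rw [h3, hLiL]
            rfl
          rw [Finset.sum_congr rfl hmid]
          simp only [ite_mul, one_mul, zero_mul, Finset.sum_ite_eq]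
          rw [if_pos (by simpa [Finset.mem_range, Nat.lt_succ_iff] using hkN)]
      _ = z * ∑ k ∈ Finset.range (n + 1), L n k * cmvZ q z k b := by
          have h4 : ∑ k ∈ Finset.range (N + 1), L n (tauF q k) * cmvZ q z k b
              = ∑' k, L n (tauF q k) * cmvZ q z k b := by
            symm
            apply tsum_eq_sum
            intro k hk
            have hk' : N < k := by simpa [Finset.mem_range, Nat.lt_succ_iff] using hk
            have hlt : n < tauF q k := by have := le_tau hq0 k; omega
            rw [hL _ _ hlt, zero_mul]
          rw [h4]
          have sigE : ℕ ≃ ℕ := ⟨sigF q, tauF q, tau_sig hq0, sig_tau hq0⟩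
          rw [← Equiv.tsum_eq (⟨sigF q, tauF q, tau_sig hq0, sig_tau hq0⟩ : ℕ ≃ ℕ)]
          simp only [Equiv.coe_fn_mk]
          have h5 : ∀ j : ℕ, L n (tauF q (sigF q j)) * cmvZ q z (sigF q j) b
              = z * (L n j * cmvZ q z j b) := by
            intro j
            rw [tau_sig hq0, cmvZ_sig hq0 hz]
            ring
          simp_rw [h5]
          rw [tsum_mul_left]
          congr 1
          apply tsum_eq_sum
          intro k hk
          have : n < k := by simp only [Finset.mem_range, Nat.lt_succ_iff] at hk; omega
          rw [hL _ _ this, zero_mul]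
  · intro a m ha
    have hp0 : 0 < p := hp
    set N := m + 2 * p with hN
    have hT' : ∀ n, mprod (mprod Vi (Ups p)) V n m
        = ∑ k ∈ Finset.range (m + 1), Vi n (tauF p k) * V k m := by
      intro n
      have h1 : mprod (mprod Vi (Ups p)) V n m = ∑' k, Vi n (tauF p k) * V k m :=
        tsum_congr fun k => by rw [mprod_Ups hp0]
      rw [h1]
      apply tsum_eq_sum
      intro k hk
      have hk' : m < k := by simpa [Finset.mem_range, Nat.lt_succ_iff] using hk
      rw [hV _ _ hk', mul_zero]
    have htau_le : ∀ k, k ≤ m → tauF p k ≤ N := by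
      intro k hk; have := tau_le hp0 k; omega
    -- reduce tsum to finite sum
    rw [tsum_eq_sum (s := Finset.range (N + 1)) (by
      intro n hn
      have hn' : N < n := by simpa [Finset.mem_range, Nat.lt_succ_iff] using hn
      rw [hT' n]
      have hzero : ∑ k ∈ Finset.range (m + 1), Vi n (tauF p k) * V k m = 0 := by
        apply Finset.sum_eq_zero
        intro k hk
        have hk' : k ≤ m := by simpa [Finset.mem_range, Nat.lt_succ_iff] using hk
        have : tauF p k < n := by have := htau_le k hk'; omega
        rw [hVi _ _ this, zero_mul]
      rw [hzero, mul_zero])]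
    calc ∑ n ∈ Finset.range (N + 1),
          (∑ k ∈ Finset.range (n + 1), cmvZ p z⁻¹ k a * V k n) *
            mprod (mprod Vi (Ups p)) V n m
        = ∑ k ∈ Finset.range (m + 1),
            (∑ n ∈ Finset.range (N + 1),
              (∑ j ∈ Finset.range (n + 1), cmvZ p z⁻¹ j a * V j n) * Vi n (tauF p k))
              * V k m := by
          simp_rw [hT', Finset.mul_sum]
          rw [Finset.sum_comm]
          apply Finset.sum_congr rfl
          intro k _
          rw [Finset.sum_mul]
          exact Finset.sum_congr rfl fun n _ => by ring
      _ = ∑ k ∈ Finset.range (m + 1), cmvZ p z⁻¹ (tauF p k) a * V k m := by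
          apply Finset.sum_congr rfl
          intro k hk
          have hkm : k ≤ m := by simpa [Finset.mem_range, Nat.lt_succ_iff] using hk
          have htN : tauF p k ≤ N := htau_le k hkm
          congr 1
          -- ∑_{n≤N} F n * Vi n t = W t a
          have hext : ∀ n ∈ Finset.range (N + 1),
              (∑ j ∈ Finset.range (n + 1), cmvZ p z⁻¹ j a * V j n) * Vi n (tauF p k)
              = ∑ j ∈ Finset.range (N + 1), cmvZ p z⁻¹ j a * V j n * Vi n (tauF p k) := by
            intro n hn
            have hnN : n ≤ N := by simpa [Finset.mem_range, Nat.lt_succ_iff] using hn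
            rw [Finset.sum_mul]
            apply Finset.sum_subset
            · intro j hj
              simp only [Finset.mem_range] at hj ⊢; omega
            · intro j _ hj
              have : n < j := by simpa [Finset.mem_range, Nat.lt_succ_iff] using hj
              rw [hV _ _ this, mul_zero, zero_mul]
          rw [Finset.sum_congr rfl hext, Finset.sum_comm]
          have hmid : ∀ j ∈ Finset.range (N + 1),
              ∑ n ∈ Finset.range (N + 1), cmvZ p z⁻¹ j a * V j n * Vi n (tauF p k)
              = cmvZ p z⁻¹ j a * (if j = tauF p k then 1 else 0) := by
            intro j _
            have h2 : ∑ n ∈ Finset.range (N + 1), cmvZ p z⁻¹ j a * V j n * Vi n (tauF p k)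
                = cmvZ p z⁻¹ j a * ∑ n ∈ Finset.range (N + 1), V j n * Vi n (tauF p k) := by
              rw [Finset.mul_sum]
              exact Finset.sum_congr rfl fun n _ => (mul_assoc _ _ _)
            rw [h2]
            congr 1
            have h3 : (∑ n ∈ Finset.range (N + 1), V j n * Vi n (tauF p k))
                = mprod V Vi j (tauF p k) := by
              symm
              apply tsum_eq_sum
              intro n hn
              have hn' : N < n := by simp only [Finset.mem_range, Nat.lt_succ_iff] at hn; omega
              have : tauF p k < n := by omega
              rw [hVi _ _ this, mul_zero]
            rw [h3, hVVi]
            rfl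
          rw [Finset.sum_congr rfl hmid]
          simp only [mul_ite, mul_one, mul_zero, Finset.sum_ite_eq']
          rw [if_pos (by simp only [Finset.mem_range, Nat.lt_succ_iff]; exact htN)]
      _ = z * ∑ k ∈ Finset.range (m + 1), cmvZ p z⁻¹ k a * V k m := by
          rw [Finset.mul_sum]
          apply Finset.sum_congr rfl
          intro k _
          rw [cmvZ_tau hp0 hz]
          ring
end
end

section
/- (Szegő-type recurrence relations.) Let q,p ≥ 1 and z ∈ ℂ∖{0}. (i) Let L, Λ be invertible lower triangular semi-infinite matrices; set R := Λ·η_{[q]}·L⁻¹ and S := L·ν_{[q]}·Λ⁻¹, and define B(n,b)(w) := ∑_{k≤n} L(n,k)·Z_{[q]}(w)(k,b) and 𝓐(n,b)(w) := ∑_{k≤n} Λ(n,k)·Z_{[q]}(w)(k,b). Then for all n, b: ∑_m R(n,m)·B(m,b)(z) = 𝓐(n,b)(z⁻¹) and ∑_m S(n,m)·𝓐(m,b)(z⁻¹) = z·B(n,b)(z) (all sums finite). (ii) Let V, W be invertible upper triangular semi-infinite matrices; set R' := W⁻¹·η_{[p]}·V and S' := V⁻¹·ν_{[p]}·W, and define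 A(a,m)(w) := ∑_{k≤m} Z_{[p]}(w)(k,a)·V(k,m) and 𝓑(a,m)(w) := ∑_{k≤m} Z_{[p]}(w)(k,a)·W(k,m). Then for all a, m: ∑_n 𝓑(a,n)(z)·R'(n,m) = A(a,m)(z⁻¹) and ∑_n A(a,n)(z⁻¹)·S'(n,m) = z·𝓑(a,m)(z). (In the paper's notation Λ = 𝓛̄, V = Ū, W = 𝓤, and these read R·B(z) = 𝓐̄(z⁻¹), S·𝓐̄(z⁻¹) = z·B(z), 𝓑(z)·R = Ā(z⁻¹), Ā(z⁻¹)·S = z·𝓑(z).) -/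
noncomputable section

/- ===== auxiliary lemmas ===== -/

def tEta (t : ℕ) : ℕ := if t = 0 then 0 else if t % 2 = 0 then t - 1 else t + 1
def tNu (t : ℕ) : ℕ := if t % 2 = 0 then t + 1 else t - 1

lemma cmvE_tEta (t : ℕ) : cmvE (tEta t) = -cmvE t := by
  simp only [cmvE, tEta]; split_ifs <;> omega
lemma cmvE_tNu (t : ℕ) : cmvE (tNu t) = -cmvE t - 1 := by
  simp only [cmvE, tNu]; split_ifs <;> omega
lemma tEta_bounds (t : ℕ) : t ≤ tEta t + 1 ∧ tEta t ≤ t + 1 := by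
  simp only [tEta]; split_ifs <;> omega
lemma tNu_bounds (t : ℕ) : t ≤ tNu t + 1 ∧ tNu t ≤ t + 1 := by
  simp only [tNu]; split_ifs <;> omega
lemma tEta_invol (t : ℕ) : tEta (tEta t) = t := by
  simp only [tEta]; split_ifs <;> first | omega | exact absurd ‹False› id
lemma tNu_invol (t : ℕ) : tNu (tNu t) = t := by
  simp only [tNu]; split_ifs <;> first | omega | exact absurd ‹False› id

def etaIdx (r n : ℕ) : ℕ := r * tEta (n / r) + n % r
def nuIdx (r n : ℕ) : ℕ := r * tNu (n / r) + n % r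

lemma etaIdx_mod (r n : ℕ) : etaIdx r n % r = n % r := by
  rw [etaIdx, Nat.mul_add_mod, Nat.mod_mod_of_dvd n (dvd_refl r)]
lemma nuIdx_mod (r n : ℕ) : nuIdx r n % r = n % r := by
  rw [nuIdx, Nat.mul_add_mod, Nat.mod_mod_of_dvd n (dvd_refl r)]
lemma etaIdx_div (r n : ℕ) (hr : 0 < r) : etaIdx r n / r = tEta (n / r) := by
  rw [etaIdx, Nat.mul_add_div hr, Nat.div_eq_of_lt (Nat.mod_lt _ hr), Nat.add_zero]
lemma nuIdx_div (r n : ℕ) (hr : 0 < r) : nuIdx r n / r = tNu (n / r) := by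
  rw [nuIdx, Nat.mul_add_div hr, Nat.div_eq_of_lt (Nat.mod_lt _ hr), Nat.add_zero]

lemma etaIdx_le (r n : ℕ) : etaIdx r n ≤ n + r := by
  have h1 := (tEta_bounds (n / r)).2
  have h2 := Nat.div_add_mod n r
  have h3 : r * tEta (n / r) ≤ r * (n / r + 1) := Nat.mul_le_mul_left r h1
  have h4 : r * (n / r + 1) = r * (n / r) + r := by ring
  rw [etaIdx]; omega
lemma nuIdx_le (r n : ℕ) : nuIdx r n ≤ n + r := by
  have h1 := (tNu_bounds (n / r)).2
  have h2 := Nat.div_add_mod n r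
  have h3 : r * tNu (n / r) ≤ r * (n / r + 1) := Nat.mul_le_mul_left r h1
  have h4 : r * (n / r + 1) = r * (n / r) + r := by ring
  rw [nuIdx]; omega

lemma etaIdx_invol (r n : ℕ) (hr : 0 < r) : etaIdx r (etaIdx r n) = n := by
  have h1 : etaIdx r (etaIdx r n) = r * tEta (etaIdx r n / r) + etaIdx r n % r := rfl
  rw [h1, etaIdx_div r n hr, etaIdx_mod, tEta_invol, Nat.div_add_mod]
lemma nuIdx_invol (r n : ℕ) (hr : 0 < r) : nuIdx r (nuIdx r n) = n := by
  have h1 : nuIdx r (nuIdx r n) = r * tNu (nuIdx r n / r) + nuIdx r n % r := rfl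
  rw [h1, nuIdx_div r n hr, nuIdx_mod, tNu_invol, Nat.div_add_mod]

lemma eta_row (r : ℕ) (hr : 0 < r) (n m : ℕ) :
    Eta r n m = if m = etaIdx r n then 1 else 0 := by
  simp only [Eta]
  by_cases h : m = etaIdx r n
  · subst h
    rw [if_pos, if_pos rfl]
    exact ⟨(etaIdx_mod r n).symm, by rw [etaIdx_div r n hr, cmvE_tEta]⟩
  · rw [if_neg, if_neg h]
    rintro ⟨h1, h2⟩
    apply h
    have h3 : m / r = tEta (n / r) := cmvE_inj (by rw [cmvE_tEta]; exact h2)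
    rw [etaIdx, ← h3, h1]
    exact (Nat.div_add_mod m r).symm
lemma nu_row (r : ℕ) (hr : 0 < r) (n m : ℕ) :
    Nu r n m = if m = nuIdx r n then 1 else 0 := by
  simp only [Nu]
  by_cases h : m = nuIdx r n
  · subst h
    rw [if_pos, if_pos rfl]
    exact ⟨(nuIdx_mod r n).symm, by rw [nuIdx_div r n hr, cmvE_tNu]⟩
  · rw [if_neg, if_neg h]
    rintro ⟨h1, h2⟩
    apply h
    have h3 : m / r = tNu (n / r) := cmvE_inj (by rw [cmvE_tNu]; omega)
    rw [nuIdx, ← h3, h1]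
    exact (Nat.div_add_mod m r).symm

lemma eta_col (r : ℕ) (hr : 0 < r) (n m : ℕ) :
    Eta r n m = if n = etaIdx r m then 1 else 0 := by
  rw [eta_row r hr]
  congr 1
  simp only [eq_iff_iff]
  constructor
  · rintro rfl; rw [etaIdx_invol r n hr]
  · rintro rfl; rw [etaIdx_invol r m hr]
lemma nu_col (r : ℕ) (hr : 0 < r) (n m : ℕ) :
    Nu r n m = if n = nuIdx r m then 1 else 0 := by
  rw [nu_row r hr]
  congr 1
  simp only [eq_iff_iff]
  constructor
  · rintro rfl; rw [nuIdx_invol r n hr]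
  · rintro rfl; rw [nuIdx_invol r m hr]

lemma cmvZ_etaIdx (r : ℕ) (hr : 0 < r) (z : ℂ) (n b : ℕ) :
    cmvZ r z (etaIdx r n) b = cmvZ r z⁻¹ n b := by
  simp only [cmvZ, etaIdx_mod, etaIdx_div r n hr, cmvE_tEta]
  split_ifs with h
  · rw [zpow_neg, ← inv_zpow]
  · rfl

lemma cmvZ_nuIdx (r : ℕ) (hr : 0 < r) (z : ℂ) (hz : z ≠ 0) (n b : ℕ) :
    cmvZ r z⁻¹ (nuIdx r n) b = z * cmvZ r z n b := by
  simp only [cmvZ, nuIdx_mod, nuIdx_div r n hr, cmvE_tNu]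
  split_ifs with h
  · rw [inv_zpow', show -(-cmvE (n / r) - 1) = cmvE (n / r) + 1 by ring,
      zpow_add_one₀ hz, mul_comm]
  · rw [mul_zero]

lemma key_lower (r : ℕ) (σ : ℕ → ℕ)
    (hσle : ∀ j, σ j ≤ j + r)
    (E : ℕ → ℕ → ℂ) (hErow : ∀ i j, E i j = if j = σ i then 1 else 0)
    (Λ Li L : ℕ → ℕ → ℂ) (hΛ : LowerTri Λ) (hLi : LowerTri Li) (hL : LowerTri L)
    (hLiL : mprod Li L = mid)
    (g : ℕ → ℂ) (n : ℕ) :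
    (∑' m, mprod (mprod Λ E) Li n m * (∑ k ∈ Finset.range (m + 1), L m k * g k))
      = ∑ i ∈ Finset.range (n + 1), Λ n i * g (σ i) := by
  set N := n + r with hN
  set R := Finset.range (N + 1) with hR
  set I := Finset.range (n + 1) with hI
  set A : ℕ → ℂ := fun j => ∑ i ∈ I, Λ n i * E i j with hA
  have step1 : ∀ j, mprod Λ E n j = A j := by
    intro j
    apply tsum_eq_sum
    intro i hi
    rw [hΛ n i (by simp only [hI, Finset.mem_range] at hi; omega), zero_mul]
  have step2 : ∀ m, mprod (mprod Λ E) Li n m = ∑ j ∈ R, A j * Li j m := by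
    intro m
    show ∑' j, mprod Λ E n j * Li j m = _
    rw [tsum_congr (fun j => by rw [step1 j])]
    apply tsum_eq_sum
    intro j hj
    simp only [hR, Finset.mem_range] at hj
    have hA0 : A j = 0 := by
      apply Finset.sum_eq_zero
      intro i hi
      simp only [hI, Finset.mem_range] at hi
      rw [hErow, if_neg (by have := hσle i; omega), mul_zero]
    rw [hA0, zero_mul]
  rw [tsum_eq_sum (s := R) (fun m hm => by
    simp only [hR, Finset.mem_range] at hm
    rw [step2 m]
    rw [Finset.sum_eq_zero (fun j hj => by
      simp only [hR, Finset.mem_range] at hj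
      rw [hLi j m (by omega), mul_zero]), zero_mul])]
  have step4 : ∀ m ∈ R, (∑ k ∈ Finset.range (m + 1), L m k * g k) = ∑ k ∈ R, L m k * g k := by
    intro m hm
    simp only [hR, Finset.mem_range] at hm
    apply Finset.sum_subset (by rw [hR]; exact Finset.range_subset_range.2 (by omega))
    intro k _ hk
    simp only [Finset.mem_range] at hk
    rw [hL m k (by omega), zero_mul]
  rw [Finset.sum_congr rfl (fun m hm => by rw [step2 m, step4 m hm])]
  have step5 : ∀ j ∈ R, ∀ k, ∑ m ∈ R, Li j m * L m k = mid j k := by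
    intro j hj k
    simp only [hR, Finset.mem_range] at hj
    have h1 : mprod Li L j k = mid j k := by rw [hLiL]
    rw [← h1]
    symm
    apply tsum_eq_sum
    intro m hm
    simp only [hR, Finset.mem_range] at hm
    rw [hLi j m (by omega), zero_mul]
  calc ∑ m ∈ R, (∑ j ∈ R, A j * Li j m) * (∑ k ∈ R, L m k * g k)
      = ∑ m ∈ R, ∑ j ∈ R, A j * Li j m * (∑ k ∈ R, L m k * g k) :=
        Finset.sum_congr rfl (fun m _ => Finset.sum_mul ..)
    _ = ∑ j ∈ R, ∑ m ∈ R, A j * Li j m * (∑ k ∈ R, L m k * g k) := Finset.sum_comm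
    _ = ∑ j ∈ R, A j * ∑ m ∈ R, Li j m * (∑ k ∈ R, L m k * g k) := by
        refine Finset.sum_congr rfl fun j _ => ?_
        rw [Finset.mul_sum]
        exact Finset.sum_congr rfl fun m _ => mul_assoc ..
    _ = ∑ j ∈ R, A j * ∑ k ∈ R, (∑ m ∈ R, Li j m * L m k) * g k := by
        refine Finset.sum_congr rfl fun j _ => ?_
        congr 1
        calc ∑ m ∈ R, Li j m * (∑ k ∈ R, L m k * g k)
            = ∑ m ∈ R, ∑ k ∈ R, Li j m * L m k * g k := by
              refine Finset.sum_congr rfl fun m _ => ?_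
              rw [Finset.mul_sum]
              exact Finset.sum_congr rfl fun k _ => (mul_assoc ..).symm
          _ = ∑ k ∈ R, ∑ m ∈ R, Li j m * L m k * g k := Finset.sum_comm
          _ = ∑ k ∈ R, (∑ m ∈ R, Li j m * L m k) * g k :=
              Finset.sum_congr rfl fun k _ => (Finset.sum_mul ..).symm
    _ = ∑ j ∈ R, A j * g j := by
        refine Finset.sum_congr rfl fun j hj => ?_
        congr 1
        rw [Finset.sum_congr rfl (fun k _ => by rw [step5 j hj k])]
        rw [Finset.sum_eq_single_of_mem j hj (fun k _ hk => by
          rw [show mid j k = 0 from if_neg (fun h => hk h.symm), zero_mul])]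
        rw [show mid j j = 1 from if_pos rfl, one_mul]
    _ = ∑ j ∈ R, ∑ i ∈ I, Λ n i * E i j * g j :=
        Finset.sum_congr rfl (fun j _ => Finset.sum_mul ..)
    _ = ∑ i ∈ I, ∑ j ∈ R, Λ n i * E i j * g j := Finset.sum_comm
    _ = ∑ i ∈ I, Λ n i * g (σ i) := by
        refine Finset.sum_congr rfl fun i hi => ?_
        simp only [hI, Finset.mem_range] at hi
        rw [Finset.sum_eq_single_of_mem (σ i)
          (by simp only [hR, Finset.mem_range]; have := hσle i; omega)
          (fun j _ hj => by rw [hErow, if_neg hj, mul_zero, zero_mul])]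
        rw [hErow, if_pos rfl, mul_one]

lemma key_upper (r : ℕ) (σ : ℕ → ℕ)
    (hσle : ∀ j, σ j ≤ j + r)
    (E : ℕ → ℕ → ℂ) (hEcol : ∀ i j, E i j = if i = σ j then 1 else 0)
    (W Wi V : ℕ → ℕ → ℂ) (hW : UpperTri W) (hWi : UpperTri Wi) (hV : UpperTri V)
    (hWWi : mprod W Wi = mid)
    (g : ℕ → ℂ) (m : ℕ) :
    (∑' n, (∑ k ∈ Finset.range (n + 1), g k * W k n) * mprod (mprod Wi E) V n m)
      = ∑ j ∈ Finset.range (m + 1), g (σ j) * V j m := by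
  set M := m + r with hM
  set R := Finset.range (M + 1) with hR
  set J := Finset.range (m + 1) with hJ
  have stepA : ∀ n j, mprod Wi E n j = Wi n (σ j) := by
    intro n j
    have h1 : ∀ i, i ≠ σ j → Wi n i * E i j = 0 := by
      intro i hi
      rw [hEcol, if_neg hi, mul_zero]
    rw [show mprod Wi E n j = ∑' i, Wi n i * E i j from rfl, tsum_eq_single (σ j) h1,
      hEcol, if_pos rfl, mul_one]
  have stepB : ∀ n, mprod (mprod Wi E) V n m = ∑ j ∈ J, Wi n (σ j) * V j m := by
    intro n
    show ∑' j, mprod Wi E n j * V j m = _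
    rw [tsum_congr (fun j => by rw [stepA n j])]
    apply tsum_eq_sum
    intro j hj
    simp only [hJ, Finset.mem_range] at hj
    rw [hV j m (by omega), mul_zero]
  rw [tsum_eq_sum (s := R) (fun n hn => by
    simp only [hR, Finset.mem_range] at hn
    rw [stepB n, show (∑ j ∈ J, Wi n (σ j) * V j m) = 0 from Finset.sum_eq_zero (fun j hj => by
      simp only [hJ, Finset.mem_range] at hj
      rw [hWi n (σ j) (by have := hσle j; omega), zero_mul]), mul_zero])]
  have stepD : ∀ n ∈ R, (∑ k ∈ Finset.range (n + 1), g k * W k n) = ∑ k ∈ R, g k * W k n := by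
    intro n hn
    simp only [hR, Finset.mem_range] at hn
    apply Finset.sum_subset (by rw [hR]; exact Finset.range_subset_range.2 (by omega))
    intro k _ hk
    simp only [Finset.mem_range] at hk
    rw [hW k n (by omega), mul_zero]
  rw [Finset.sum_congr rfl (fun n hn => by rw [stepB n, stepD n hn])]
  have stepE : ∀ j ∈ J, ∀ k, ∑ n ∈ R, W k n * Wi n (σ j) = mid k (σ j) := by
    intro j hj k
    simp only [hJ, Finset.mem_range] at hj
    have h1 : mprod W Wi k (σ j) = mid k (σ j) := by rw [hWWi]
    rw [← h1]
    symm
    apply tsum_eq_sum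
    intro i hi
    simp only [hR, Finset.mem_range] at hi
    rw [hWi i (σ j) (by have := hσle j; omega), mul_zero]
  calc ∑ n ∈ R, (∑ k ∈ R, g k * W k n) * (∑ j ∈ J, Wi n (σ j) * V j m)
      = ∑ n ∈ R, ∑ j ∈ J, (∑ k ∈ R, g k * W k n) * Wi n (σ j) * V j m := by
        refine Finset.sum_congr rfl fun n _ => ?_
        rw [Finset.mul_sum]
        exact Finset.sum_congr rfl fun j _ => (mul_assoc ..).symm
    _ = ∑ j ∈ J, ∑ n ∈ R, (∑ k ∈ R, g k * W k n) * Wi n (σ j) * V j m := Finset.sum_comm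
    _ = ∑ j ∈ J, (∑ n ∈ R, (∑ k ∈ R, g k * W k n) * Wi n (σ j)) * V j m :=
        Finset.sum_congr rfl fun j _ => (Finset.sum_mul ..).symm
    _ = ∑ j ∈ J, (∑ k ∈ R, g k * mid k (σ j)) * V j m := by
        refine Finset.sum_congr rfl fun j hj => ?_
        congr 1
        calc ∑ n ∈ R, (∑ k ∈ R, g k * W k n) * Wi n (σ j)
            = ∑ n ∈ R, ∑ k ∈ R, g k * (W k n * Wi n (σ j)) := by
              refine Finset.sum_congr rfl fun n _ => ?_
              rw [Finset.sum_mul]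
              exact Finset.sum_congr rfl fun k _ => mul_assoc ..
          _ = ∑ k ∈ R, ∑ n ∈ R, g k * (W k n * Wi n (σ j)) := Finset.sum_comm
          _ = ∑ k ∈ R, g k * mid k (σ j) := by
              refine Finset.sum_congr rfl fun k _ => ?_
              rw [← Finset.mul_sum, stepE j hj k]
    _ = ∑ j ∈ J, g (σ j) * V j m := by
        refine Finset.sum_congr rfl fun j hj => ?_
        simp only [hJ, Finset.mem_range] at hj
        congr 1
        rw [Finset.sum_eq_single_of_mem (σ j)
          (by simp only [hR, Finset.mem_range]; have := hσle j; omega)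
          (fun k _ hk => by rw [show mid k (σ j) = 0 from if_neg hk, mul_zero])]
        rw [show mid (σ j) (σ j) = 1 from if_pos rfl, mul_one]

/-- Szegő-type recurrence relations. -/
theorem stmt_13 (q p : ℕ) (hq : 1 ≤ q) (hp : 1 ≤ p) (z : ℂ) (hz : z ≠ 0)
    (L Li Λ Λi : ℕ → ℕ → ℂ) (hL : LowerTri L) (hLi : LowerTri Li)
    (hΛ : LowerTri Λ) (hΛi : LowerTri Λi)
    (hLLi : mprod L Li = mid) (hLiL : mprod Li L = mid)
    (hΛΛi : mprod Λ Λi = mid) (hΛiΛ : mprod Λi Λ = mid)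
    (V Vi W Wi : ℕ → ℕ → ℂ) (hV : UpperTri V) (hVi : UpperTri Vi)
    (hW : UpperTri W) (hWi : UpperTri Wi)
    (hVVi : mprod V Vi = mid) (hViV : mprod Vi V = mid)
    (hWWi : mprod W Wi = mid) (hWiW : mprod Wi W = mid) :
    (∀ n b : ℕ, b < q →
      (∑' m, mprod (mprod Λ (Eta q)) Li n m *
          (∑ k ∈ Finset.range (m + 1), L m k * cmvZ q z k b))
        = ∑ k ∈ Finset.range (n + 1), Λ n k * cmvZ q z⁻¹ k b) ∧
    (∀ n b : ℕ, b < q →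
      (∑' m, mprod (mprod L (Nu q)) Λi n m *
          (∑ k ∈ Finset.range (m + 1), Λ m k * cmvZ q z⁻¹ k b))
        = z * ∑ k ∈ Finset.range (n + 1), L n k * cmvZ q z k b) ∧
    (∀ a m : ℕ, a < p →
      (∑' n, (∑ k ∈ Finset.range (n + 1), cmvZ p z k a * W k n) *
          mprod (mprod Wi (Eta p)) V n m)
        = ∑ k ∈ Finset.range (m + 1), cmvZ p z⁻¹ k a * V k m) ∧
    (∀ a m : ℕ, a < p →
      (∑' n, (∑ k ∈ Finset.range (n + 1), cmvZ p z⁻¹ k a * V k n) *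
          mprod (mprod Vi (Nu p)) W n m)
        = z * ∑ k ∈ Finset.range (m + 1), cmvZ p z k a * W k m) := by
  have hq0 : 0 < q := hq
  have hp0 : 0 < p := hp
  refine ⟨?_, ?_, ?_, ?_⟩
  · intro n b _
    have h := key_lower q (etaIdx q) (fun j => etaIdx_le q j) (Eta q)
      (fun i j => eta_row q hq0 i j) Λ Li L hΛ hLi hL hLiL (fun k => cmvZ q z k b) n
    exact h.trans (Finset.sum_congr rfl fun i _ => by rw [cmvZ_etaIdx q hq0 z i b])
  · intro n b _
    have h := key_lower q (nuIdx q) (fun j => nuIdx_le q j) (Nu q)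
      (fun i j => nu_row q hq0 i j) L Λi Λ hL hΛi hΛ hΛiΛ (fun k => cmvZ q z⁻¹ k b) n
    refine h.trans ?_
    rw [Finset.mul_sum]
    refine Finset.sum_congr rfl fun i _ => ?_
    rw [cmvZ_nuIdx q hq0 z hz i b]
    ring
  · intro a m _
    have h := key_upper p (etaIdx p) (fun j => etaIdx_le p j) (Eta p)
      (fun i j => eta_col p hp0 i j) W Wi V hW hWi hV hWWi (fun k => cmvZ p z k a) m
    exact h.trans (Finset.sum_congr rfl fun j _ => by rw [cmvZ_etaIdx p hp0 z j a])
  · intro a m _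
    have h := key_upper p (nuIdx p) (fun j => nuIdx_le p j) (Nu p)
      (fun i j => nu_col p hp0 i j) V Vi W hV hVi hW hVVi (fun k => cmvZ p z⁻¹ k a) m
    refine h.trans ?_
    rw [Finset.mul_sum]
    refine Finset.sum_congr rfl fun j _ => ?_
    rw [cmvZ_nuIdx p hp0 z hz j a]
    ring
end
end

section
/- (Christoffel–Darboux formula.) Let q,p ≥ 1, let x,y ∈ ℂ with x ≠ 0, and let T be a semi-infinite complex matrix with T(i,j) = 0 whenever j > i + 2q or i > j + 2p. Let β : ℕ × {0,…,q−1} → ℂ and α : ℕ × {0,…,p−1} → ℂ (the values B_j^{(b)}(y) and A_i^{(a)}(x⁻¹) of the CMV Laurent polynomial families) satisfy, for all i, b and all j, a: ∑_j T(i,j)·β(j,b) = y·β(i,b) and ∑_i α(i,a)·T(i,j) = x⁻¹·α(j,a) (finite sums by bandedness). Define K^{[n]}_{a,b} := ∑_{k<n} α(k,a)·β(k,b). Then for every n ≥ 1 and all a, b: (x⁻¹ − y)·K^{[n]}_{a,b} = ∑_{i≥n, j<n} α(i,a)·T(i,j)·β(j,b) − ∑_{i<n, j≥n} α(i,a)·T(i,j)·β(j,b),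 where both double sums are finite (only i < n+2p and j < n+2q contribute). -/
noncomputable section

/-!
Multiply `K^{[n]}` by `x⁻¹ - y` and use the two eigenvalue relations to write
`x⁻¹ K^{[n]} = ∑_{j<n} (αT)_j β_j` and `y K^{[n]} = ∑_{i<n} α_i (Tβ)_i`. Both are sums of
`α_i T_{ij} β_j`, the first over `j < n`, the second over `i < n`; their common part `i, j < n`
cancels, leaving the two off-diagonal blocks, which bandedness of `T` makes finite.
-/

open Finset

section Banded

variable {R : Type*} [Semiring R] {T : ℕ → ℕ → R}

theorem tsum_mul_eq_sum_range_of_upper_band [TopologicalSpace R] {r : ℕ} (hT : ∀ i j, i + r < j → T i j = 0)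
    (v : ℕ → R) {i N : ℕ} (hN : i + r < N) :
    ∑' j, T i j * v j = ∑ j ∈ range N, T i j * v j :=
  tsum_eq_sum fun j hj => by
    rw [hT i j (by simp at hj; omega), zero_mul]

theorem tsum_mul_eq_sum_range_of_lower_band [TopologicalSpace R] {s : ℕ} (hT : ∀ i j, j + s < i → T i j = 0)
    (u : ℕ → R) {j N : ℕ} (hN : j + s < N) :
    ∑' i, u i * T i j = ∑ i ∈ range N, u i * T i j :=
  tsum_eq_sum fun i hi => by
    rw [hT i j (by simp at hi; omega), mul_zero]

theorem sum_Ico_sum_range_eq_of_lower_band {s : ℕ} (hT : ∀ i j, j + s < i → T i j = 0)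
    (u v : ℕ → R) {n N : ℕ} (hN : n + s ≤ N) :
    ∑ i ∈ Ico n N, ∑ j ∈ range n, u i * T i j * v j =
      ∑ i ∈ Ico n (n + s), ∑ j ∈ range n, u i * T i j * v j := by
  refine (sum_subset (Ico_subset_Ico_right hN) fun i hi hi' => ?_).symm
  refine sum_eq_zero fun j hj => ?_
  simp only [mem_Ico, mem_range] at hi hi' hj
  rw [hT i j (by omega), mul_zero, zero_mul]

theorem sum_range_sum_Ico_eq_of_upper_band {r : ℕ} (hT : ∀ i j, i + r < j → T i j = 0)
    (u v : ℕ → R) {n N : ℕ} (hN : n + r ≤ N) :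
    ∑ i ∈ range n, ∑ j ∈ Ico n N, u i * T i j * v j =
      ∑ i ∈ range n, ∑ j ∈ Ico n (n + r), u i * T i j * v j := by
  refine sum_congr rfl fun i hi => (sum_subset (Ico_subset_Ico_right hN) fun j hj hj' => ?_).symm
  simp only [mem_Ico, mem_range] at hi hj hj'
  rw [hT i j (by omega), mul_zero, zero_mul]

end Banded

theorem sum_range_col_sub_sum_range_row {R : Type*} [CommRing R] (T : ℕ → ℕ → R)
    (u v : ℕ → R) {n N : ℕ} (hn : n ≤ N) :
    ∑ j ∈ range n, (∑ i ∈ range N, u i * T i j) * v j -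
        ∑ i ∈ range n, u i * ∑ j ∈ range N, T i j * v j =
      ∑ i ∈ Ico n N, ∑ j ∈ range n, u i * T i j * v j -
        ∑ i ∈ range n, ∑ j ∈ Ico n N, u i * T i j * v j := by
  have hcols : ∑ j ∈ range n, (∑ i ∈ range N, u i * T i j) * v j =
      ∑ i ∈ range N, ∑ j ∈ range n, u i * T i j * v j := by
    simp_rw [sum_mul]
    exact sum_comm
  have hrows : ∑ i ∈ range n, u i * ∑ j ∈ range N, T i j * v j =
      ∑ i ∈ range n, ∑ j ∈ range N, u i * T i j * v j := by
    simp_rw [mul_sum, mul_assoc]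
  rw [hcols, hrows, ← sum_range_add_sum_Ico _ hn]
  simp_rw [← sum_range_add_sum_Ico _ hn, sum_add_distrib]
  ring

theorem stmt_14_general (q p : ℕ) (x y : ℂ)
    (T : ℕ → ℕ → ℂ)
    (hT : ∀ i j, (i + 2 * q < j → T i j = 0) ∧ (j + 2 * p < i → T i j = 0))
    (β α : ℕ → ℕ → ℂ)
    (hβ : ∀ i b : ℕ, b < q → (∑' j, T i j * β j b) = y * β i b)
    (hα : ∀ j a : ℕ, a < p → (∑' i, α i a * T i j) = x⁻¹ * α j a) :
    ∀ n : ℕ, 1 ≤ n → ∀ a b : ℕ, a < p → b < q →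
      (x⁻¹ - y) * (∑ k ∈ Finset.range n, α k a * β k b) =
        (∑ i ∈ Finset.Ico n (n + 2 * p), ∑ j ∈ Finset.range n, α i a * T i j * β j b)
          - (∑ i ∈ Finset.range n, ∑ j ∈ Finset.Ico n (n + 2 * q), α i a * T i j * β j b) := by
  intro n _ a b ha hb
  have hup : ∀ i j, i + 2 * q < j → T i j = 0 := fun i j => (hT i j).1
  have hlow : ∀ i j, j + 2 * p < i → T i j = 0 := fun i j => (hT i j).2
  set N := n + 2 * p + 2 * q with hN
  have hcol : ∀ k < n, ∑ i ∈ range N, α i a * T i k = x⁻¹ * α k a := fun k hk => by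
    rw [← hα k a ha, tsum_mul_eq_sum_range_of_lower_band hlow _ (N := N) (by omega)]
  have hrow : ∀ k < n, ∑ j ∈ range N, T k j * β j b = y * β k b := fun k hk => by
    rw [← hβ k b hb, tsum_mul_eq_sum_range_of_upper_band hup _ (N := N) (by omega)]
  calc (x⁻¹ - y) * ∑ k ∈ range n, α k a * β k b
      = ∑ j ∈ range n, (∑ i ∈ range N, α i a * T i j) * β j b -
          ∑ i ∈ range n, α i a * ∑ j ∈ range N, T i j * β j b := by
        rw [mul_sum, ← sum_sub_distrib]
        refine sum_congr rfl fun k hk => ?_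
        rw [hcol k (mem_range.1 hk), hrow k (mem_range.1 hk)]
        ring
    _ = _ := by
        rw [sum_range_col_sub_sum_range_row T _ _ (by omega),
          sum_Ico_sum_range_eq_of_lower_band hlow _ _ (by omega),
          sum_range_sum_Ico_eq_of_upper_band hup _ _ (by omega)]

/-- Christoffel–Darboux formula. -/
theorem stmt_14 (q p : ℕ) (hq : 1 ≤ q) (hp : 1 ≤ p) (x y : ℂ) (hx : x ≠ 0)
    (T : ℕ → ℕ → ℂ)
    (hT : ∀ i j, (i + 2 * q < j → T i j = 0) ∧ (j + 2 * p < i → T i j = 0))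
    (β α : ℕ → ℕ → ℂ)
    (hβ : ∀ i b : ℕ, b < q → (∑' j, T i j * β j b) = y * β i b)
    (hα : ∀ j a : ℕ, a < p → (∑' i, α i a * T i j) = x⁻¹ * α j a) :
    ∀ n : ℕ, 1 ≤ n → ∀ a b : ℕ, a < p → b < q →
      (x⁻¹ - y) * (∑ k ∈ Finset.range n, α k a * β k b) =
        (∑ i ∈ Finset.Ico n (n + 2 * p), ∑ j ∈ Finset.range n, α i a * T i j * β j b)
          - (∑ i ∈ Finset.range n, ∑ j ∈ Finset.Ico n (n + 2 * q), α i a * T i j * β j b) :=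
  stmt_14_general q p x y T hT β α hβ hα
end
end

section
/- (ABC theorem.) Fix integers q,p ≥ 1, n ≥ 1, and a moment sequence c : ℤ → Matrix(Fin q, Fin p, ℂ). Let M be the n×n complex matrix with entries M(i,j) := c(e(⌊i/q⌋) − e(⌊j/p⌋))(i mod q, j mod p) for i,j ∈ Fin n (the truncated left CMV moment matrix), and suppose M = L⁻¹·U⁻¹ where L is an invertible lower triangular and U an invertible upper triangular n×n complex matrix. Define, for k ∈ Fin n, b ∈ {0,…,q−1}, a ∈ {0,…,p−1}: B_k^{(b)}(y) := ∑_{j≤k} L(k,j)·Z_{[q]}(y)(j,b) and A_k^{(a)}(x) := ∑_{j≤k} Z_{[p]}(x)(j,a)·U(j,k). Then for all nonzero x,y ∈ ℂ and all a, b: ∑_{k∈Fin n} A_k^{(a)}(x⁻¹)·B_k^{(b)}(y) = ∑_{i∈Fin n} ∑_{j∈Fin n} Z_{[p]}(x⁻¹)(i,a)·(M⁻¹)(i,j)·Z_{[q]}(y)(j,b); that is, the truncated Christoffel–Darboux kernel equals Z_{[p]}ᵀ(x⁻¹)·(M^{[n]})⁻¹·Z_{[q]}(y). -/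
noncomputable section

/-- ABC theorem, K^{[n]}(x,y) = Z_{[p]}ᵀ(x⁻¹)·(M^{[n]})⁻¹·Z_{[q]}(y). -/
theorem stmt_16 (q p n : ℕ) (hq : 0 < q) (hp : 0 < p) (hn : 0 < n)
    (c : ℤ → Matrix (Fin q) (Fin p) ℂ)
    (M L U : Matrix (Fin n) (Fin n) ℂ)
    (hM : ∀ i j : Fin n, M i j = c (cmvE ((i : ℕ) / q) - cmvE ((j : ℕ) / p))
        ⟨(i : ℕ) % q, Nat.mod_lt _ hq⟩ ⟨(j : ℕ) % p, Nat.mod_lt _ hp⟩)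
    (hL : ∀ i j : Fin n, i < j → L i j = 0)
    (hU : ∀ i j : Fin n, j < i → U i j = 0)
    (hLu : IsUnit L) (hUu : IsUnit U)
    (hfac : M = L⁻¹ * U⁻¹) :
    ∀ x y : ℂ, x ≠ 0 → y ≠ 0 → ∀ b a : ℕ, b < q → a < p →
      (∑ k : Fin n,
          (∑ j : Fin n, if (j : ℕ) ≤ (k : ℕ) then cmvZ p x⁻¹ (j : ℕ) a * U j k else 0) *
          (∑ j : Fin n, if (j : ℕ) ≤ (k : ℕ) then L k j * cmvZ q y (j : ℕ) b else 0))
        = ∑ i : Fin n, ∑ j : Fin n,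
            cmvZ p x⁻¹ (i : ℕ) a * M⁻¹ i j * cmvZ q y (j : ℕ) b := by
  intro x y hx hy b a hb ha
  have hMinv : M⁻¹ = U * L := by
    rw [hfac, Matrix.mul_inv_rev,
      Matrix.nonsing_inv_nonsing_inv U ((Matrix.isUnit_iff_isUnit_det U).mp hUu),
      Matrix.nonsing_inv_nonsing_inv L ((Matrix.isUnit_iff_isUnit_det L).mp hLu)]
  have h1 : ∀ k : Fin n,
      (∑ j : Fin n, if (j : ℕ) ≤ (k : ℕ) then cmvZ p x⁻¹ (j : ℕ) a * U j k else 0)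
        = ∑ j : Fin n, cmvZ p x⁻¹ (j : ℕ) a * U j k := by
    intro k
    refine Finset.sum_congr rfl fun j _ => ?_
    by_cases h : (j : ℕ) ≤ (k : ℕ)
    · simp [h]
    · rw [if_neg h, hU j k (by omega), mul_zero]
  have h2 : ∀ k : Fin n,
      (∑ j : Fin n, if (j : ℕ) ≤ (k : ℕ) then L k j * cmvZ q y (j : ℕ) b else 0)
        = ∑ j : Fin n, L k j * cmvZ q y (j : ℕ) b := by
    intro k
    refine Finset.sum_congr rfl fun j _ => ?_
    by_cases h : (j : ℕ) ≤ (k : ℕ)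
    · simp [h]
    · rw [if_neg h, hL k j (by omega), zero_mul]
  simp only [h1, h2, hMinv, Matrix.mul_apply]
  calc ∑ k : Fin n, (∑ i : Fin n, cmvZ p x⁻¹ (i : ℕ) a * U i k) *
          (∑ j : Fin n, L k j * cmvZ q y (j : ℕ) b)
      = ∑ k : Fin n, ∑ i : Fin n, ∑ j : Fin n,
          cmvZ p x⁻¹ (i : ℕ) a * U i k * (L k j * cmvZ q y (j : ℕ) b) := by
        refine Finset.sum_congr rfl fun k _ => ?_
        rw [Finset.sum_mul_sum]
    _ = ∑ i : Fin n, ∑ k : Fin n, ∑ j : Fin n,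
          cmvZ p x⁻¹ (i : ℕ) a * U i k * (L k j * cmvZ q y (j : ℕ) b) :=
        Finset.sum_comm
    _ = ∑ i : Fin n, ∑ j : Fin n, ∑ k : Fin n,
          cmvZ p x⁻¹ (i : ℕ) a * U i k * (L k j * cmvZ q y (j : ℕ) b) :=
        Finset.sum_congr rfl fun i _ => Finset.sum_comm
    _ = ∑ i : Fin n, ∑ j : Fin n,
          cmvZ p x⁻¹ (i : ℕ) a * (∑ k : Fin n, U i k * L k j) * cmvZ q y (j : ℕ) b := by
        refine Finset.sum_congr rfl fun i _ => Finset.sum_congr rfl fun j _ => ?_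
        rw [Finset.mul_sum, Finset.sum_mul]
        exact Finset.sum_congr rfl fun k _ => by ring
end
end

section
/- (Christoffel connection formulas.) Let q,p,d ≥ 1, let W_b(z) = ∑_{i=−d}^{d} ω_{b,i} z^i (b ∈ {0,…,q−1}) be Laurent polynomials, let c be a moment sequence and ĉ the Christoffel-perturbed moments. Suppose M_c = L⁻¹·U⁻¹ and M_ĉ = L̂⁻¹·Û⁻¹, where L, L̂ are invertible lower triangular and U, Û invertible upper triangular semi-infinite matrices. Set N := Û⁻¹·U. Then: (i) N = L̂·𝒲·L⁻¹ entrywise (in particular N(n,m) = 0 for m < n and for m > n + 2dq); (ii) for every z ∈ ℂ∖{0}, n ∈ ℕ, b ∈ {0,…,q−1}: ∑_m N(n,m)·B(m,b)(z) = W_b(z)·B̂(n,b)(z), where B(m,b)(z) := ∑_{k≤m} L(m,k)·Z_{[q]}(z)(k,b) and B̂ is defined likewise from L̂; (iii) for every z ∈ ℂ∖{0}, a ∈ {0,…,p−1}, m ∈ ℕ: ∑_{n≤m} Â(a,n)(z⁻¹)·N(n,m) = A(a,m)(z⁻¹), where A(a,m)(w) := ∑_{k≤m} Z_{[p]}(w)(k,a)·U(k,m)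 and Â is defined likewise from Û. -/
noncomputable section

/-- Integer powers of Υ_{[r]}, with Υ_{[r]}^{-i} := (Υ_{[r]}ᵀ)^{i}. -/
def UpsZ (r : ℕ) (i : ℤ) : ℕ → ℕ → ℂ :=
  if 0 ≤ i then mpow (Ups r) i.toNat else mpow (mtrans (Ups r)) (-i).toNat

/-- The matrix 𝒲 = ∑_{b=0}^{q-1} ∑_{i=-d}^{d} ω_{b,i}·Υ_{[q]}^{i}·I^{(b)}, where I^{(b)} is the
diagonal 0–1 matrix selecting the indices n ≡ b (mod q). -/
def Wcal (q d : ℕ) (ω : ℕ → ℤ → ℂ) : ℕ → ℕ → ℂ := fun n m =>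
  ∑ b ∈ Finset.range q, ∑ i ∈ Finset.Icc (-(d : ℤ)) (d : ℤ),
    ω b i * (UpsZ q i n m * (if m % q = b then 1 else 0))

/-- The Christoffel-perturbed moments ĉ(n)(b,a) := ∑_{i=-d}^{d} ω_{b,i}·c(n+i)(b,a). -/
def chat (q p d : ℕ) (ω : ℕ → ℤ → ℂ) (c : ℤ → Matrix (Fin q) (Fin p) ℂ) :
    ℤ → Matrix (Fin q) (Fin p) ℂ := fun n =>
  Matrix.of fun b a => ∑ i ∈ Finset.Icc (-(d : ℤ)) (d : ℤ), ω b.1 i * c (n + i) b a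

section Aux
open Finset

private def eInv (i : ℤ) : ℕ := if 0 ≤ i then 2 * i.toNat else 2 * (-i).toNat - 1

private lemma cmvE_eInv (i : ℤ) : cmvE (eInv i) = i := by
  unfold cmvE eInv; split_ifs <;> omega

private lemma eInv_cmvE (n : ℕ) : eInv (cmvE n) = n := by
  unfold cmvE eInv; split_ifs <;> omega

private lemma cmvE_inj_s18 {a b : ℕ} (h : cmvE a = cmvE b) : a = b := by
  rw [← eInv_cmvE a, ← eInv_cmvE b, h]

private lemma cmvE_gap {a b : ℕ} {i : ℤ} (h : cmvE b = cmvE a + i) : b ≤ a + 2 * i.natAbs := by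
  unfold cmvE at h; split_ifs at h <;> omega

private lemma idx_mod {q : ℕ} (hq : 0 < q) (x r : ℕ) (hr : r < q) : (q * x + r) % q = r := by
  rw [Nat.mul_add_mod, Nat.mod_eq_of_lt hr]

private lemma idx_div {q : ℕ} (hq : 0 < q) (x r : ℕ) (hr : r < q) : (q * x + r) / q = x := by
  rw [Nat.mul_add_div hq, Nat.div_eq_of_lt hr, add_zero]

private lemma eq_idx {q k r : ℕ} {i : ℤ} (hk : k % q = r) (he : cmvE (k / q) = i) :
    k = q * eInv i + r := by
  have h1 : eInv i = k / q := by rw [← he, eInv_cmvE]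
  have h2 := Nat.div_add_mod k q
  rw [h1, ← hk]; exact h2.symm

private lemma mpow_Ups {q : ℕ} (hq : 0 < q) (j : ℕ) :
    ∀ n m, mpow (Ups q) j n m =
      if n % q = m % q ∧ cmvE (m / q) = cmvE (n / q) + (j : ℤ) then 1 else 0 := by
  induction j with
  | zero =>
    intro n m
    show mid n m = _
    unfold mid
    by_cases h : n = m
    · subst h; simp
    · rw [if_neg h, if_neg]
      rintro ⟨h1, h2⟩
      simp only [Nat.cast_zero, add_zero] at h2
      have h3 : m / q = n / q := cmvE_inj_s18 h2
      have hn := Nat.div_add_mod n q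
      have hm := Nat.div_add_mod m q
      rw [h1, ← h3] at hn
      exact h (hn.symm.trans hm)
  | succ j ih =>
    intro n m
    show (∑' k, Ups q n k * mpow (Ups q) j k m) = _
    have hr : n % q < q := Nat.mod_lt _ hq
    set k₀ := q * eInv (cmvE (n / q) + 1) + n % q with hk₀
    have hm0 : k₀ % q = n % q := idx_mod hq _ _ hr
    have hd0 : cmvE (k₀ / q) = cmvE (n / q) + 1 := by
      rw [hk₀, idx_div hq _ _ hr, cmvE_eInv]
    rw [tsum_eq_single k₀ (fun k hk => by
      unfold Ups
      rw [if_neg, zero_mul]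
      rintro ⟨h1, h2⟩
      exact hk (eq_idx h1.symm h2))]
    have hU : Ups q n k₀ = 1 := by unfold Ups; rw [if_pos ⟨hm0.symm, hd0⟩]
    rw [hU, one_mul, ih k₀ m, hm0, hd0]
    have he : cmvE (n / q) + 1 + (j : ℤ) = cmvE (n / q) + ((j + 1 : ℕ) : ℤ) := by
      push_cast; ring
    rw [he]

private lemma mpow_UpsT {q : ℕ} (hq : 0 < q) (j : ℕ) :
    ∀ n m, mpow (mtrans (Ups q)) j n m =
      if n % q = m % q ∧ cmvE (m / q) = cmvE (n / q) - (j : ℤ) then 1 else 0 := by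
  induction j with
  | zero =>
    intro n m
    show mid n m = _
    unfold mid
    by_cases h : n = m
    · subst h; simp
    · rw [if_neg h, if_neg]
      rintro ⟨h1, h2⟩
      simp only [Nat.cast_zero, sub_zero] at h2
      have h3 : m / q = n / q := cmvE_inj_s18 h2
      have hn := Nat.div_add_mod n q
      have hm := Nat.div_add_mod m q
      rw [h1, ← h3] at hn
      exact h (hn.symm.trans hm)
  | succ j ih =>
    intro n m
    show (∑' k, mtrans (Ups q) n k * mpow (mtrans (Ups q)) j k m) = _
    have hr : n % q < q := Nat.mod_lt _ hq
    set k₀ := q * eInv (cmvE (n / q) - 1) + n % q with hk₀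
    have hm0 : k₀ % q = n % q := idx_mod hq _ _ hr
    have hd0 : cmvE (k₀ / q) = cmvE (n / q) - 1 := by
      rw [hk₀, idx_div hq _ _ hr, cmvE_eInv]
    rw [tsum_eq_single k₀ (fun k hk => by
      unfold mtrans Ups
      rw [if_neg, zero_mul]
      rintro ⟨h1, h2⟩
      exact hk (eq_idx h1 (by omega)))]
    have hU : mtrans (Ups q) n k₀ = 1 := by
      unfold mtrans Ups; rw [if_pos ⟨hm0, by omega⟩]
    rw [hU, one_mul, ih k₀ m, hm0, hd0]
    have he : cmvE (n / q) - 1 - (j : ℤ) = cmvE (n / q) - ((j + 1 : ℕ) : ℤ) := by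
      push_cast; ring
    rw [he]

private lemma UpsZ_eq {q : ℕ} (hq : 0 < q) (i : ℤ) (n m : ℕ) :
    UpsZ q i n m = if n % q = m % q ∧ cmvE (m / q) = cmvE (n / q) + i then 1 else 0 := by
  by_cases h : 0 ≤ i
  · rw [show UpsZ q i = mpow (Ups q) i.toNat from if_pos h, mpow_Ups hq,
      Int.toNat_of_nonneg h]
  · rw [show UpsZ q i = mpow (mtrans (Ups q)) (-i).toNat from if_neg h, mpow_UpsT hq]
    have h2 : ((-i).toNat : ℤ) = -i := Int.toNat_of_nonneg (by omega)
    rw [h2, sub_neg_eq_add]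

private lemma UpsZ_zero {q : ℕ} (hq : 0 < q) (i : ℤ) (n k : ℕ)
    (hk : k ≠ q * eInv (cmvE (n / q) + i) + n % q) : UpsZ q i n k = 0 := by
  rw [UpsZ_eq hq, if_neg]
  rintro ⟨h1, h2⟩
  exact hk (eq_idx h1.symm h2)

private lemma UpsZ_one {q : ℕ} (hq : 0 < q) (i : ℤ) (n : ℕ) :
    UpsZ q i n (q * eInv (cmvE (n / q) + i) + n % q) = 1 := by
  have hr : n % q < q := Nat.mod_lt _ hq
  rw [UpsZ_eq hq, if_pos ⟨(idx_mod hq _ _ hr).symm, by rw [idx_div hq _ _ hr, cmvE_eInv]⟩]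

private lemma Wcal_eq {q : ℕ} (hq : 0 < q) (d : ℕ) (ω : ℕ → ℤ → ℂ) (n m : ℕ) :
    Wcal q d ω n m = ∑ i ∈ Finset.Icc (-(d : ℤ)) (d : ℤ), ω (m % q) i * UpsZ q i n m := by
  unfold Wcal
  rw [Finset.sum_eq_single_of_mem (m % q) (Finset.mem_range.2 (Nat.mod_lt _ hq))
    (fun b _ hb => Finset.sum_eq_zero fun i _ => by
      rw [if_neg fun h => hb h.symm, mul_zero, mul_zero])]
  exact Finset.sum_congr rfl fun i _ => by rw [if_pos rfl, mul_one]

private lemma Wcal_band {q : ℕ} (hq : 0 < q) {d : ℕ} (ω : ℕ → ℤ → ℂ) {n m : ℕ}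
    (h : n + 2 * d * q < m) : Wcal q d ω n m = 0 := by
  rw [Wcal_eq hq]
  refine Finset.sum_eq_zero fun i hi => ?_
  rw [UpsZ_eq hq]
  split_ifs with hcond
  · exfalso
    obtain ⟨h1, h2⟩ := hcond
    have hgap : m / q ≤ n / q + 2 * i.natAbs := cmvE_gap h2
    have hid : i.natAbs ≤ d := by
      simp only [Finset.mem_Icc] at hi; omega
    have h3 : m / q ≤ n / q + 2 * d := by omega
    have h4 : q * (m / q) ≤ q * (n / q + 2 * d) := Nat.mul_le_mul le_rfl h3
    have hm := Nat.div_add_mod m q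
    have hn := Nat.div_add_mod n q
    have h5 : m ≤ n + 2 * d * q := by
      calc m = q * (m / q) + m % q := hm.symm
        _ ≤ q * (n / q + 2 * d) + m % q := Nat.add_le_add_right h4 _
        _ = q * (n / q) + n % q + 2 * d * q := by rw [← h1]; ring
        _ = n + 2 * d * q := by rw [hn]
    exact absurd h (not_lt.mpr h5)
  · exact mul_zero _

end Aux
section Aux2
open Finset

private def RF (A : ℕ → ℕ → ℂ) : Prop := ∀ n, ∃ N, ∀ k, N < k → A n k = 0
private def CF (A : ℕ → ℕ → ℂ) : Prop := ∀ m, ∃ N, ∀ k, N < k → A k m = 0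

private lemma RF_lower {L : ℕ → ℕ → ℂ} (h : LowerTri L) : RF L :=
  fun n => ⟨n, fun k hk => h n k hk⟩

private lemma CF_upper {U : ℕ → ℕ → ℂ} (h : UpperTri U) : CF U :=
  fun m => ⟨m, fun k hk => h k m hk⟩

private lemma RF_mprod {A B : ℕ → ℕ → ℂ} (hA : RF A) (hB : RF B) : RF (mprod A B) := by
  intro n
  obtain ⟨N₁, h₁⟩ := hA n
  classical
  refine ⟨(Finset.range (N₁ + 1)).sup (fun k => (hB k).choose), fun m hm => ?_⟩
  show (∑' k, A n k * B k m) = 0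
  have hz : ∀ k, A n k * B k m = 0 := by
    intro k
    rcases le_or_gt k N₁ with hk | hk
    · have h4 : (hB k).choose ≤ (Finset.range (N₁ + 1)).sup (fun k => (hB k).choose) :=
        Finset.le_sup (f := fun k => (hB k).choose) (Finset.mem_range.2 (Nat.lt_succ_of_le hk))
      rw [(hB k).choose_spec m (lt_of_le_of_lt h4 hm), mul_zero]
    · rw [h₁ k hk, zero_mul]
  exact (tsum_congr hz).trans tsum_zero

private lemma tsum_swap_rect (F : ℕ → ℕ → ℂ) (N₁ N₂ : ℕ)
    (h : ∀ k j, F k j ≠ 0 → k ≤ N₁ ∧ j ≤ N₂) :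
    ∑' j, ∑' k, F k j = ∑' k, ∑' j, F k j := by
  have hk : ∀ j, (∑' k, F k j) = ∑ k ∈ Finset.range (N₁ + 1), F k j := fun j =>
    tsum_eq_sum fun k hks => by
      by_contra hne
      have := (h k j hne).1
      simp only [Finset.mem_range, not_lt] at hks
      omega
  have hj : ∀ k, (∑' j, F k j) = ∑ j ∈ Finset.range (N₂ + 1), F k j := fun k =>
    tsum_eq_sum fun j hjs => by
      by_contra hne
      have := (h k j hne).2
      simp only [Finset.mem_range, not_lt] at hjs
      omega
  calc ∑' j, ∑' k, F k j
      = ∑' j, ∑ k ∈ Finset.range (N₁ + 1), F k j := tsum_congr hk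
    _ = ∑ j ∈ Finset.range (N₂ + 1), ∑ k ∈ Finset.range (N₁ + 1), F k j :=
        tsum_eq_sum fun j hjs => Finset.sum_eq_zero fun k _ => by
          by_contra hne
          have := (h k j hne).2
          simp only [Finset.mem_range, not_lt] at hjs
          omega
    _ = ∑ k ∈ Finset.range (N₁ + 1), ∑ j ∈ Finset.range (N₂ + 1), F k j := Finset.sum_comm
    _ = ∑ k ∈ Finset.range (N₁ + 1), ∑' j, F k j :=
        Finset.sum_congr rfl fun k _ => (hj k).symm
    _ = ∑' k, ∑' j, F k j := by
        refine (tsum_eq_sum fun k hks => ?_).symm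
        rw [hj k]
        refine Finset.sum_eq_zero fun j _ => ?_
        by_contra hne
        have := (h k j hne).1
        simp only [Finset.mem_range, not_lt] at hks
        omega

private lemma massoc_aux (A B C : ℕ → ℕ → ℂ) (n m N₁ N₂ : ℕ)
    (h : ∀ k j, A n k * B k j * C j m ≠ 0 → k ≤ N₁ ∧ j ≤ N₂) :
    mprod (mprod A B) C n m = mprod A (mprod B C) n m := by
  show (∑' j, (∑' k, A n k * B k j) * C j m) = ∑' k, A n k * (∑' j, B k j * C j m)
  calc (∑' j, (∑' k, A n k * B k j) * C j m)
      = ∑' j, ∑' k, A n k * B k j * C j m := tsum_congr fun j => tsum_mul_right.symm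
    _ = ∑' k, ∑' j, A n k * B k j * C j m := tsum_swap_rect _ N₁ N₂ h
    _ = ∑' k, A n k * (∑' j, B k j * C j m) := tsum_congr fun k => by
        simp only [mul_assoc]; exact tsum_mul_left

private lemma massoc_rc {A C : ℕ → ℕ → ℂ} (B : ℕ → ℕ → ℂ) (hA : RF A) (hC : CF C) :
    mprod (mprod A B) C = mprod A (mprod B C) := by
  funext n m
  obtain ⟨N₁, h₁⟩ := hA n
  obtain ⟨N₂, h₂⟩ := hC m
  refine massoc_aux A B C n m N₁ N₂ fun k j hne => ⟨?_, ?_⟩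
  · by_contra hk; exact hne (by rw [h₁ k (by omega)]; ring)
  · by_contra hj; exact hne (by rw [h₂ j (by omega)]; ring)

private lemma massoc_rr {A B : ℕ → ℕ → ℂ} (C : ℕ → ℕ → ℂ) (hA : RF A) (hB : RF B) :
    mprod (mprod A B) C = mprod A (mprod B C) := by
  classical
  funext n m
  obtain ⟨N₁, h₁⟩ := hA n
  refine massoc_aux A B C n m N₁ ((Finset.range (N₁ + 1)).sup fun k => (hB k).choose)
    fun k j hne => ?_
  have hk : k ≤ N₁ := by
    by_contra hk; exact hne (by rw [h₁ k (by omega)]; ring)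
  refine ⟨hk, ?_⟩
  by_contra hj
  have h4 : (hB k).choose ≤ (Finset.range (N₁ + 1)).sup fun k => (hB k).choose :=
    Finset.le_sup (f := fun k => (hB k).choose) (Finset.mem_range.2 (Nat.lt_succ_of_le hk))
  exact hne (by rw [(hB k).choose_spec j (by omega)]; ring)

private lemma massoc_cc {B C : ℕ → ℕ → ℂ} (A : ℕ → ℕ → ℂ) (hB : CF B) (hC : CF C) :
    mprod (mprod A B) C = mprod A (mprod B C) := by
  classical
  funext n m
  obtain ⟨N₂, h₂⟩ := hC m
  refine massoc_aux A B C n m ((Finset.range (N₂ + 1)).sup fun j => (hB j).choose) N₂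
    fun k j hne => ?_
  have hj : j ≤ N₂ := by
    by_contra hj; exact hne (by rw [h₂ j (by omega)]; ring)
  refine ⟨?_, hj⟩
  by_contra hk
  have h4 : (hB j).choose ≤ (Finset.range (N₂ + 1)).sup fun j => (hB j).choose :=
    Finset.le_sup (f := fun j => (hB j).choose) (Finset.mem_range.2 (Nat.lt_succ_of_le hj))
  exact hne (by rw [(hB j).choose_spec k (by omega)]; ring)

private lemma mprod_mid (A : ℕ → ℕ → ℂ) : mprod A mid = A := by
  funext n m
  show (∑' k, A n k * mid k m) = A n m
  rw [tsum_eq_single m fun k hk => by unfold mid; rw [if_neg hk, mul_zero]]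
  unfold mid; rw [if_pos rfl, mul_one]

private lemma mid_mprod (A : ℕ → ℕ → ℂ) : mprod mid A = A := by
  funext n m
  show (∑' k, mid n k * A k m) = A n m
  rw [tsum_eq_single n fun k hk => by unfold mid; rw [if_neg fun h => hk h.symm, zero_mul]]
  unfold mid; rw [if_pos rfl, one_mul]

private def mvec (A : ℕ → ℕ → ℂ) (v : ℕ → ℂ) : ℕ → ℂ := fun n => ∑' k, A n k * v k
private def vmat (v : ℕ → ℂ) (A : ℕ → ℕ → ℂ) : ℕ → ℂ := fun m => ∑' k, v k * A k m

private lemma mvec_assoc {A B : ℕ → ℕ → ℂ} (v : ℕ → ℂ) (hA : RF A) (hB : RF B) :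
    mvec (mprod A B) v = mvec A (mvec B v) := by
  funext n
  exact congrFun (congrFun (massoc_rr (fun j _ => v j) hA hB) n) 0

private lemma vmat_assoc {A B : ℕ → ℕ → ℂ} (v : ℕ → ℂ) (hA : CF A) (hB : CF B) :
    vmat (vmat v A) B = vmat v (mprod A B) := by
  funext m
  exact congrFun (congrFun (massoc_cc (fun x k => v k) hA hB) 0) m

private lemma mvec_mid (v : ℕ → ℂ) : mvec mid v = v := by
  funext n
  show (∑' k, mid n k * v k) = v n
  rw [tsum_eq_single n fun k hk => by unfold mid; rw [if_neg fun h => hk h.symm, zero_mul]]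
  unfold mid; rw [if_pos rfl, one_mul]

end Aux2
section Aux3
open Finset

private lemma WM {q p : ℕ} (hq : 0 < q) (hp : 0 < p) (d : ℕ) (ω : ℕ → ℤ → ℂ)
    (c : ℤ → Matrix (Fin q) (Fin p) ℂ) (n m : ℕ) :
    mprod (Wcal q d ω) (cmvM hq hp c) n m = cmvM hq hp (chat q p d ω c) n m := by
  show (∑' k, Wcal q d ω n k * cmvM hq hp c k m) = _
  have h1 : ∀ k, Wcal q d ω n k * cmvM hq hp c k m
      = ∑ i ∈ Finset.Icc (-(d : ℤ)) (d : ℤ), ω (k % q) i * UpsZ q i n k * cmvM hq hp c k m :=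
    fun k => by rw [Wcal_eq hq, Finset.sum_mul]
  rw [tsum_congr h1, Summable.tsum_finsetSum (fun i _ =>
    summable_of_ne_finset_zero (s := {q * eInv (cmvE (n / q) + i) + n % q}) fun k hk => by
      rw [UpsZ_zero hq i n k (by simpa using hk), mul_zero, zero_mul])]
  show _ = chat q p d ω c (cmvE (n / q) - cmvE (m / p)) ⟨n % q, Nat.mod_lt _ hq⟩
    ⟨m % p, Nat.mod_lt _ hp⟩
  unfold chat
  rw [Matrix.of_apply]
  refine Finset.sum_congr rfl fun i _ => ?_
  set k₀ := q * eInv (cmvE (n / q) + i) + n % q with hk₀def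
  rw [tsum_eq_single k₀ fun k hk => by
    rw [UpsZ_zero hq i n k hk, mul_zero, zero_mul]]
  have hr : n % q < q := Nat.mod_lt _ hq
  have e1 : k₀ % q = n % q := idx_mod hq _ _ hr
  have e2 : cmvE (k₀ / q) = cmvE (n / q) + i := by
    rw [hk₀def, idx_div hq _ _ hr, cmvE_eInv]
  rw [UpsZ_one hq, mul_one]
  show ω (k₀ % q) i * c (cmvE (k₀ / q) - cmvE (m / p)) ⟨k₀ % q, Nat.mod_lt _ hq⟩
      ⟨m % p, Nat.mod_lt _ hp⟩ = _
  simp only [e1, e2]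
  rw [show cmvE (n / q) + i - cmvE (m / p) = cmvE (n / q) - cmvE (m / p) + i from by ring]

private lemma Wz {q : ℕ} (hq : 0 < q) (d : ℕ) (ω : ℕ → ℤ → ℂ) {z : ℂ} (hz : z ≠ 0)
    (b n : ℕ) :
    mvec (Wcal q d ω) (fun k => cmvZ q z k b) n
      = (∑ i ∈ Finset.Icc (-(d : ℤ)) (d : ℤ), ω b i * z ^ i) * cmvZ q z n b := by
  show (∑' k, Wcal q d ω n k * cmvZ q z k b) = _
  have h1 : ∀ k, Wcal q d ω n k * cmvZ q z k b
      = ∑ i ∈ Finset.Icc (-(d : ℤ)) (d : ℤ), ω (k % q) i * UpsZ q i n k * cmvZ q z k b :=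
    fun k => by rw [Wcal_eq hq, Finset.sum_mul]
  rw [tsum_congr h1, Summable.tsum_finsetSum (fun i _ =>
    summable_of_ne_finset_zero (s := {q * eInv (cmvE (n / q) + i) + n % q}) fun k hk => by
      rw [UpsZ_zero hq i n k (by simpa using hk), mul_zero, zero_mul])]
  have hr : n % q < q := Nat.mod_lt _ hq
  have step : ∀ i ∈ Finset.Icc (-(d : ℤ)) (d : ℤ),
      (∑' k, ω (k % q) i * UpsZ q i n k * cmvZ q z k b)
        = ω (n % q) i * (if n % q = b then z ^ (cmvE (n / q) + i) else 0) := by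
    intro i _
    set k₀ := q * eInv (cmvE (n / q) + i) + n % q with hk₀def
    rw [tsum_eq_single k₀ fun k hk => by
      rw [UpsZ_zero hq i n k hk, mul_zero, zero_mul]]
    have e1 : k₀ % q = n % q := idx_mod hq _ _ hr
    have e2 : cmvE (k₀ / q) = cmvE (n / q) + i := by
      rw [hk₀def, idx_div hq _ _ hr, cmvE_eInv]
    rw [UpsZ_one hq, mul_one]
    show ω (k₀ % q) i * (if k₀ % q = b then z ^ (cmvE (k₀ / q)) else 0) = _
    rw [e1, e2]
  rw [Finset.sum_congr rfl step]
  by_cases hb : n % q = b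
  · have hzn : cmvZ q z n b = z ^ (cmvE (n / q)) := by
      show (if n % q = b then z ^ cmvE (n / q) else 0) = _
      rw [if_pos hb]
    rw [hzn, Finset.sum_mul]
    refine Finset.sum_congr rfl fun i _ => ?_
    rw [if_pos hb, hb, zpow_add₀ hz]
    ring
  · have hzn : cmvZ q z n b = 0 := by
      show (if n % q = b then z ^ cmvE (n / q) else 0) = 0
      rw [if_neg hb]
    rw [hzn, mul_zero]
    exact Finset.sum_eq_zero fun i _ => by rw [if_neg hb, mul_zero]

end Aux3
/-- Christoffel connection formulas, N = Û⁻¹·U = L̂·𝒲·L⁻¹,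
N·B^{(b)}(z) = W_b(z)·B̂^{(b)}(z) and Â^{(a)}(z⁻¹)·N = A^{(a)}(z⁻¹). -/
theorem stmt_18 (q p d : ℕ) (hq : 0 < q) (hp : 0 < p) (hd : 1 ≤ d)
    (ω : ℕ → ℤ → ℂ) (c : ℤ → Matrix (Fin q) (Fin p) ℂ)
    (L Li U Ui Lh Lhi Uh Uhi : ℕ → ℕ → ℂ)
    (hL : LowerTri L) (hLi : LowerTri Li) (hU : UpperTri U) (hUi : UpperTri Ui)
    (hLh : LowerTri Lh) (hLhi : LowerTri Lhi) (hUh : UpperTri Uh) (hUhi : UpperTri Uhi)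
    (hLLi : mprod L Li = mid) (hLiL : mprod Li L = mid)
    (hUUi : mprod U Ui = mid) (hUiU : mprod Ui U = mid)
    (hLhLhi : mprod Lh Lhi = mid) (hLhiLh : mprod Lhi Lh = mid)
    (hUhUhi : mprod Uh Uhi = mid) (hUhiUh : mprod Uhi Uh = mid)
    (hM : ∀ n m, cmvM hq hp c n m = mprod Li Ui n m)
    (hMh : ∀ n m, cmvM hq hp (chat q p d ω c) n m = mprod Lhi Uhi n m) :
    (∀ n m, mprod Uhi U n m = mprod (mprod Lh (Wcal q d ω)) Li n m) ∧
    (∀ n m, m < n → mprod Uhi U n m = 0) ∧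
    (∀ n m, n + 2 * d * q < m → mprod Uhi U n m = 0) ∧
    (∀ z : ℂ, z ≠ 0 → ∀ n b : ℕ, b < q →
      (∑' m, mprod Uhi U n m * (∑ k ∈ Finset.range (m + 1), L m k * cmvZ q z k b))
        = (∑ i ∈ Finset.Icc (-(d : ℤ)) (d : ℤ), ω b i * z ^ i) *
            (∑ k ∈ Finset.range (n + 1), Lh n k * cmvZ q z k b)) ∧
    (∀ z : ℂ, z ≠ 0 → ∀ a m : ℕ, a < p →
      (∑ nn ∈ Finset.range (m + 1),
          (∑ k ∈ Finset.range (nn + 1), cmvZ p z⁻¹ k a * Uh k nn) * mprod Uhi U nn m)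
        = ∑ k ∈ Finset.range (m + 1), cmvZ p z⁻¹ k a * U k m) := by
  classical
  have RFL : RF L := RF_lower hL
  have RFLi : RF Li := RF_lower hLi
  have RFLh : RF Lh := RF_lower hLh
  have CFU : CF U := CF_upper hU
  have CFUh : CF Uh := CF_upper hUh
  have CFUhi : CF Uhi := CF_upper hUhi
  have RFW : RF (Wcal q d ω) := fun n => ⟨n + 2 * d * q, fun k hk => Wcal_band hq ω hk⟩
  have hMfun : cmvM hq hp c = mprod Li Ui := funext fun n => funext fun m => hM n m
  have hMhfun : cmvM hq hp (chat q p d ω c) = mprod Lhi Uhi :=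
    funext fun n => funext fun m => hMh n m
  have hWM : mprod (Wcal q d ω) (cmvM hq hp c) = cmvM hq hp (chat q p d ω c) :=
    funext fun n => funext fun m => WM hq hp d ω c n m
  have hUhirep : Uhi = mprod (mprod (mprod Lh (Wcal q d ω)) Li) Ui := by
    calc Uhi = mprod mid Uhi := (mid_mprod Uhi).symm
      _ = mprod (mprod Lh Lhi) Uhi := by rw [hLhLhi]
      _ = mprod Lh (mprod Lhi Uhi) := massoc_rc Lhi RFLh CFUhi
      _ = mprod Lh (mprod (Wcal q d ω) (mprod Li Ui)) := by
          rw [← hMhfun, ← hWM, hMfun]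
      _ = mprod Lh (mprod (mprod (Wcal q d ω) Li) Ui) := by
          rw [massoc_rr Ui RFW RFLi]
      _ = mprod (mprod Lh (mprod (Wcal q d ω) Li)) Ui :=
          (massoc_rr Ui RFLh (RF_mprod RFW RFLi)).symm
      _ = mprod (mprod (mprod Lh (Wcal q d ω)) Li) Ui := by
          rw [massoc_rr Li RFLh RFW]
  have Nrep : mprod Uhi U = mprod (mprod Lh (Wcal q d ω)) Li := by
    rw [hUhirep, massoc_rc Ui (RF_mprod (RF_mprod RFLh RFW) RFLi) CFU, hUiU, mprod_mid]
  have Nupper : ∀ n m, m < n → mprod Uhi U n m = 0 := by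
    intro n m hmn
    show (∑' k, Uhi n k * U k m) = 0
    have hzz : ∀ k, Uhi n k * U k m = 0 := fun k => by
      rcases lt_or_ge k n with h | h
      · rw [hUhi n k h, zero_mul]
      · rw [hU k m (lt_of_lt_of_le hmn h), mul_zero]
    exact (tsum_congr hzz).trans tsum_zero
  have Nband : ∀ n m, n + 2 * d * q < m → mprod Uhi U n m = 0 := by
    intro n m hm
    rw [congrFun (congrFun Nrep n) m]
    show (∑' j, mprod Lh (Wcal q d ω) n j * Li j m) = 0
    have hzz : ∀ j, mprod Lh (Wcal q d ω) n j * Li j m = 0 := fun j => by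
      rcases lt_or_ge j m with h | h
      · rw [hLi j m h, mul_zero]
      · have hin : (∑' k, Lh n k * Wcal q d ω k j) = 0 := by
          have hz2 : ∀ k, Lh n k * Wcal q d ω k j = 0 := fun k => by
            rcases le_or_gt k n with hk | hk
            · rw [Wcal_band hq ω
                (lt_of_le_of_lt (Nat.add_le_add_right hk _) (lt_of_lt_of_le hm h)), mul_zero]
            · rw [hLh n k hk, zero_mul]
          exact (tsum_congr hz2).trans tsum_zero
        show (∑' k, Lh n k * Wcal q d ω k j) * Li j m = 0
        rw [hin, zero_mul]
    exact (tsum_congr hzz).trans tsum_zero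
  refine ⟨fun n m => congrFun (congrFun Nrep n) m, Nupper, Nband, ?_, ?_⟩
  · -- part iv
    intro z hz n b hb
    set Zb : ℕ → ℂ := fun k => cmvZ q z k b with hZb
    have hBv : ∀ m, (∑ k ∈ Finset.range (m + 1), L m k * cmvZ q z k b) = mvec L Zb m :=
      fun m => (tsum_eq_sum fun k hk => by
        rw [hL m k (by simp only [Finset.mem_range, not_lt] at hk; omega), zero_mul]).symm
    have step1 : (∑' m, mprod Uhi U n m * (∑ k ∈ Finset.range (m + 1), L m k * cmvZ q z k b))
        = mvec (mprod Uhi U) (mvec L Zb) n := tsum_congr fun m => by rw [hBv m]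
    rw [step1, Nrep]
    show mvec (mprod (mprod Lh (Wcal q d ω)) Li) (mvec L Zb) n = _
    rw [mvec_assoc (mvec L Zb) (RF_mprod RFLh RFW) RFLi]
    have inner : mvec Li (mvec L Zb) = Zb := by
      rw [← mvec_assoc Zb RFLi RFL, hLiL, mvec_mid]
    rw [inner, mvec_assoc Zb RFLh RFW]
    have hW : mvec (Wcal q d ω) Zb
        = fun k => (∑ i ∈ Finset.Icc (-(d : ℤ)) (d : ℤ), ω b i * z ^ i) * Zb k :=
      funext fun k => Wz hq d ω hz b k
    rw [hW]
    show (∑' k, Lh n k * ((∑ i ∈ Finset.Icc (-(d : ℤ)) (d : ℤ), ω b i * z ^ i) * Zb k)) = _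
    rw [tsum_congr fun k =>
      mul_left_comm (Lh n k) (∑ i ∈ Finset.Icc (-(d : ℤ)) (d : ℤ), ω b i * z ^ i) (Zb k),
      tsum_mul_left]
    congr 1
    exact tsum_eq_sum fun k hk => by
      rw [hLh n k (by simp only [Finset.mem_range, not_lt] at hk; omega), zero_mul]
  · -- part v
    intro z hz a m ha
    set w : ℕ → ℂ := fun k => cmvZ p z⁻¹ k a with hw
    have CFN : CF (mprod Uhi U) := fun mm => ⟨mm, fun k hk => Nupper k mm hk⟩
    have hAv : ∀ nn, (∑ k ∈ Finset.range (nn + 1), cmvZ p z⁻¹ k a * Uh k nn) = vmat w Uh nn :=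
      fun nn => (tsum_eq_sum fun k hk => by
        rw [hUh k nn (by simp only [Finset.mem_range, not_lt] at hk; omega), mul_zero]).symm
    calc (∑ nn ∈ Finset.range (m + 1),
            (∑ k ∈ Finset.range (nn + 1), cmvZ p z⁻¹ k a * Uh k nn) * mprod Uhi U nn m)
        = ∑ nn ∈ Finset.range (m + 1), vmat w Uh nn * mprod Uhi U nn m :=
          Finset.sum_congr rfl fun nn _ => by rw [hAv nn]
      _ = ∑' nn, vmat w Uh nn * mprod Uhi U nn m :=
          (tsum_eq_sum fun nn hnn => by
            rw [Nupper nn m (by simp only [Finset.mem_range, not_lt] at hnn; omega),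
              mul_zero]).symm
      _ = vmat (vmat w Uh) (mprod Uhi U) m := rfl
      _ = vmat w (mprod Uh (mprod Uhi U)) m := by rw [vmat_assoc w CFUh CFN]
      _ = vmat w U m := by rw [← massoc_cc Uh CFUhi CFU, hUhUhi, mid_mprod]
      _ = ∑ k ∈ Finset.range (m + 1), cmvZ p z⁻¹ k a * U k m :=
          tsum_eq_sum fun k hk => by
            rw [hU k m (by simp only [Finset.mem_range, not_lt] at hk; omega), mul_zero]
end
end
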